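/- arXiv:1603.06160 — 7 statements merged into one kernel-verified Lean document; each statement's English description precedes it below -/
import Mathlib

section
/- Let f = (1/n)∑ᵢ fᵢ be L-smooth with σ-bounded gradients (‖∇fᵢ(x)‖ ≤ σ for all i, x). Consider SGD iterates x^{t+1} = x^t - η ∇f_{i_t}(x^t) with i_t uniform on {1,…,n} and constant step size η = c/√T where c = √(2(f(x⁰) - f(x*))/(Lσ²)) and x* minimizes f. Then min_{0 ≤ t ≤ T-1} E[‖∇f(x^t)‖²] ≤ σ·√(2(f(x⁰) - f(x*))·L / T). -/
open MeasureTheory ENNReal InnerProductSpace intervalIntegral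

section Aux

lemma sgd_descent {F : Type*} [NormedAddCommGroup F] [InnerProductSpace ℝ F] [CompleteSpace F]
    {f : F → ℝ} {L : ℝ}
    (hdiff : Differentiable ℝ f)
    (hlip : ∀ x y, ‖gradient f x - gradient f y‖ ≤ L * ‖x - y‖)
    (x y : F) :
    f y ≤ f x + inner ℝ (gradient f x) (y - x) + L / 2 * ‖y - x‖ ^ 2 := by
  set v := y - x with hv
  have hgradcont : Continuous (gradient f) := by
    refine (LipschitzWith.of_dist_le_mul (K := L.toNNReal) ?_).continuous
    intro a b
    simp only [dist_eq_norm]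
    calc ‖gradient f a - gradient f b‖ ≤ L * ‖a - b‖ := hlip a b
    _ ≤ L.toNNReal * ‖a - b‖ := by
        gcongr; exact Real.le_coe_toNNReal L
  have hpath : ∀ t : ℝ, HasDerivAt (fun t : ℝ => x + t • v) v t := by
    intro t
    simpa using ((hasDerivAt_id t).smul_const v).const_add x
  have hg : ∀ t : ℝ, HasDerivAt (fun t : ℝ => f (x + t • v))
      (inner ℝ (gradient f (x + t • v)) v) t := by
    intro t
    have := ((hdiff (x + t • v)).hasFDerivAt).comp_hasDerivAt t (hpath t)
    have hinner : fderiv ℝ f (x + t • v) v = inner ℝ (gradient f (x + t • v)) v := by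
      rw [gradient, toDual_symm_apply]
    rwa [hinner] at this
  have hcont : Continuous (fun t : ℝ => (inner ℝ (gradient f (x + t • v)) v : ℝ)) := by
    exact (hgradcont.comp (continuous_const.add (continuous_id.smul continuous_const))).inner
      continuous_const
  have heq : f y - f x = ∫ t in (0:ℝ)..1, (inner ℝ (gradient f (x + t • v)) v : ℝ) := by
    have := integral_eq_sub_of_hasDerivAt (f := fun t : ℝ => f (x + t • v))
      (f' := fun t : ℝ => (inner ℝ (gradient f (x + t • v)) v : ℝ))
      (a := 0) (b := 1) (fun t _ => hg t) (hcont.intervalIntegrable 0 1)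
    rw [this]; simp [hv]
  have hbound : ∫ t in (0:ℝ)..1, (inner ℝ (gradient f (x + t • v)) v : ℝ) ≤
      ∫ t in (0:ℝ)..1, ((inner ℝ (gradient f x) v : ℝ) + L * ‖v‖ ^ 2 * t) := by
    apply integral_mono_on (by norm_num) (hcont.intervalIntegrable 0 1)
    · exact (continuous_const.add (continuous_const.mul continuous_id)).intervalIntegrable 0 1
    · intro t ht
      obtain ⟨ht0, ht1⟩ := ht
      have h1 : (inner ℝ (gradient f (x + t • v)) v : ℝ) - inner ℝ (gradient f x) v
          = inner ℝ (gradient f (x + t • v) - gradient f x) v := by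
        rw [inner_sub_left]
      have h2 : (inner ℝ (gradient f (x + t • v) - gradient f x) v : ℝ) ≤
          ‖gradient f (x + t • v) - gradient f x‖ * ‖v‖ := real_inner_le_norm _ _
      have h3 : ‖gradient f (x + t • v) - gradient f x‖ ≤ L * (t * ‖v‖) := by
        have := hlip (x + t • v) x
        simpa [norm_smul, abs_of_nonneg ht0] using this
      nlinarith [norm_nonneg v]
  have hint : ∫ t in (0:ℝ)..1, ((inner ℝ (gradient f x) v : ℝ) + L * ‖v‖ ^ 2 * t)
      = inner ℝ (gradient f x) v + L / 2 * ‖v‖ ^ 2 := by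
    have h1 : IntervalIntegrable (fun t : ℝ => L * ‖v‖ ^ 2 * t) MeasureTheory.volume 0 1 :=
      (by fun_prop : Continuous fun t : ℝ => L * ‖v‖ ^ 2 * t).intervalIntegrable 0 1
    rw [integral_add (intervalIntegrable_const) h1,
      intervalIntegral.integral_const_mul, integral_id]
    simp
    ring
  linarith [heq, hbound, hint.le, hint.ge]

lemma int_to_sum {n T : ℕ} [NeZero n]
    (g : (Fin T → Fin n) → ℝ) :
    ∫ ω, g ω ∂(Measure.pi fun _ : Fin T => (PMF.uniformOfFintype (Fin n)).toMeasure)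
      = ∑ ω : Fin T → Fin n, ((n : ℝ)⁻¹ ^ T) * g ω := by
  have hsing : ∀ ω : Fin T → Fin n,
      (Measure.pi fun _ : Fin T => (PMF.uniformOfFintype (Fin n)).toMeasure) {ω}
        = ((n : ℝ≥0∞)⁻¹) ^ T := by
    intro ω
    have : {ω} = Set.pi Set.univ (fun t => ({ω t} : Set (Fin n))) := by
      ext ρ; simp [funext_iff, Set.mem_pi]
    rw [this, Measure.pi_pi]
    simp [PMF.toMeasure_apply_singleton _ _ (measurableSet_singleton _),
      PMF.uniformOfFintype_apply]
  have hint : Integrable g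
      (Measure.pi fun _ : Fin T => (PMF.uniformOfFintype (Fin n)).toMeasure) := by
    have : IsProbabilityMeasure
        (Measure.pi fun _ : Fin T => (PMF.uniformOfFintype (Fin n)).toMeasure) := by
      infer_instance
    exact Integrable.of_finite
  rw [integral_fintype _]
  refine Finset.sum_congr rfl fun ω _ => ?_
  rw [Measure.real, hsing ω]
  simp [smul_eq_mul, ENNReal.toReal_pow, ENNReal.toReal_inv]
  exact hint

lemma resample_sum {n T : ℕ} (t : Fin T) (F : (Fin T → Fin n) → ℝ) :
    ∑ ω : Fin T → Fin n, ∑ j : Fin n, F (Function.update ω t j)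
      = (n : ℝ) * ∑ ω : Fin T → Fin n, F ω := by
  let e : ((Fin T → Fin n) × Fin n) ≃ ((Fin T → Fin n) × Fin n) :=
    { toFun := fun p => (Function.update p.1 t p.2, p.1 t)
      invFun := fun p => (Function.update p.1 t p.2, p.1 t)
      left_inv := fun p => by
        ext1
        · simp [Function.update_idem, Function.update_eq_self]
        · simp
      right_inv := fun p => by
        ext1
        · simp [Function.update_idem, Function.update_eq_self]
        · simp }
  calc ∑ ω : Fin T → Fin n, ∑ j : Fin n, F (Function.update ω t j)
      = ∑ p : (Fin T → Fin n) × Fin n, F ((e p).1) := by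
        rw [Fintype.sum_prod_type]
        simp only [e, Equiv.coe_fn_mk]
    _ = ∑ p : (Fin T → Fin n) × Fin n, F p.1 := e.sum_comp (fun p => F p.1)
    _ = (n : ℝ) * ∑ ω : Fin T → Fin n, F ω := by
        rw [Fintype.sum_prod_type]
        simp only [Finset.sum_const, Finset.card_univ, Fintype.card_fin, nsmul_eq_mul]
        rw [← Finset.mul_sum]

end Aux

set_option maxHeartbeats 2000000 in
theorem sgd_convergence {d n T : ℕ} [NeZero n] (hT : 1 ≤ T)
    (fi : Fin n → EuclideanSpace ℝ (Fin d) → ℝ) (L σ : ℝ) (hL : 0 < L) (hσ : 0 < σ)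
    (hdiff : ∀ i, Differentiable ℝ (fi i))
    (hlip : ∀ i x y, ‖gradient (fi i) x - gradient (fi i) y‖ ≤ L * ‖x - y‖)
    (hbound : ∀ i x, ‖gradient (fi i) x‖ ≤ σ)
    (f : EuclideanSpace ℝ (Fin d) → ℝ)
    (hf : f = fun x => (1 / (n : ℝ)) * ∑ i, fi i x)
    (xstar x0 : EuclideanSpace ℝ (Fin d)) (hmin : ∀ y, f xstar ≤ f y)
    (c η : ℝ)
    (hc : c = Real.sqrt (2 * (f x0 - f xstar) / (L * σ ^ 2)))
    (hη : η = c / Real.sqrt T)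
    (x : ℕ → (Fin T → Fin n) → EuclideanSpace ℝ (Fin d))
    (hx0 : ∀ ω, x 0 ω = x0)
    (hstep : ∀ (t : Fin T) ω,
      x (t + 1) ω = x t ω - η • gradient (fi (ω t)) (x t ω))
    (μ : Measure (Fin T → Fin n))
    (hμ : μ = Measure.pi fun _ => (PMF.uniformOfFintype (Fin n)).toMeasure) :
    (Finset.range T).inf' (Finset.nonempty_range_iff.mpr (by omega))
        (fun t => ∫ ω, ‖gradient f (x t ω)‖ ^ 2 ∂μ) ≤
      Real.sqrt (2 * (f x0 - f xstar) * L / T) * σ := by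
  have hn : 0 < (n : ℝ) := by
    have := Nat.pos_of_ne_zero (NeZero.ne n)
    exact_mod_cast this
  -- gradient of f
  have hgrad : ∀ y, gradient f y = (n : ℝ)⁻¹ • ∑ i, gradient (fi i) y := by
    intro y
    rw [hf]
    unfold gradient
    rw [show (fun x => (1 / (n : ℝ)) * ∑ i, fi i x) = fun x => (n : ℝ)⁻¹ * ∑ i, fi i x by
          simp [one_div]]
    rw [fderiv_const_mul (by exact (Differentiable.fun_sum (fun i _ => hdiff i)).differentiableAt)]
    rw [fderiv_fun_sum (fun i _ => (hdiff i).differentiableAt)]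
    simp [_root_.map_smul, _root_.map_sum]
  have hdifff : Differentiable ℝ f := by
    rw [hf]
    exact Differentiable.const_mul (Differentiable.fun_sum (fun i _ => hdiff i)) _
  have hlipf : ∀ a b, ‖gradient f a - gradient f b‖ ≤ L * ‖a - b‖ := by
    intro a b
    rw [hgrad, hgrad, ← smul_sub, ← Finset.sum_sub_distrib, norm_smul]
    have h1 : ‖∑ i : Fin n, (gradient (fi i) a - gradient (fi i) b)‖
        ≤ ∑ i : Fin n, (L * ‖a - b‖) := by
      refine le_trans (norm_sum_le _ _) (Finset.sum_le_sum fun i _ => hlip i a b)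
    rw [Finset.sum_const, Finset.card_univ, Fintype.card_fin, nsmul_eq_mul] at h1
    have : ‖(n:ℝ)⁻¹‖ = (n:ℝ)⁻¹ := by
      rw [Real.norm_eq_abs, abs_of_nonneg (by positivity)]
    rw [this]
    calc (n:ℝ)⁻¹ * ‖∑ i : Fin n, (gradient (fi i) a - gradient (fi i) b)‖
        ≤ (n:ℝ)⁻¹ * ((n:ℝ) * (L * ‖a - b‖)) := by
          apply mul_le_mul_of_nonneg_left h1 (by positivity)
      _ = L * ‖a - b‖ := by field_simp
  have hgsum : ∀ y, ∑ i, gradient (fi i) y = (n : ℝ) • gradient f y := by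
    intro y
    rw [hgrad, smul_smul]
    rw [mul_inv_cancel₀ (ne_of_gt hn), one_smul]
  have hη0 : 0 ≤ η := by
    rw [hη, hc]
    positivity
  -- Δ
  set Δ : ℝ := f x0 - f xstar with hΔ
  have hΔ0 : 0 ≤ Δ := by simp [hΔ, sub_nonneg, hmin x0]
  -- dependence lemma
  have hdep : ∀ m : ℕ, m ≤ T → ∀ ω ω' : Fin T → Fin n,
      (∀ s : Fin T, (s : ℕ) < m → ω s = ω' s) → x m ω = x m ω' := by
    intro m
    induction m with
    | zero => intro _ ω ω' _; rw [hx0, hx0]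
    | succ k ih =>
      intro hk ω ω' h
      have hkT : k < T := hk
      have h1 := hstep ⟨k, hkT⟩ ω
      have h2 := hstep ⟨k, hkT⟩ ω'
      simp only [Fin.val_mk] at h1 h2
      rw [h1, h2]
      rw [ih (le_of_lt hkT) ω ω' (fun s hs => h s (Nat.lt_succ_of_lt hs)),
        h ⟨k, hkT⟩ (Nat.lt_succ_self k)]
  -- weighted sums
  set w : ℝ := (n : ℝ)⁻¹ ^ T with hw
  have hw0 : 0 ≤ w := by positivity
  have hwsum : ∑ _ω : Fin T → Fin n, w = 1 := by
    rw [Finset.sum_const, Finset.card_univ, Fintype.card_fun, Fintype.card_fin,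
      Fintype.card_fin, nsmul_eq_mul, hw]
    push_cast
    rw [← mul_pow, mul_inv_cancel₀ (ne_of_gt hn), one_pow]
  set A : ℕ → ℝ := fun t => ∑ ω : Fin T → Fin n, w * ‖gradient f (x t ω)‖ ^ 2 with hA
  set Fv : ℕ → ℝ := fun t => ∑ ω : Fin T → Fin n, w * f (x t ω) with hFv
  -- expectation identity
  have hE : ∀ t : Fin T,
      ∑ ω : Fin T → Fin n, w *
        (inner ℝ (gradient f (x t ω)) (gradient (fi (ω t)) (x t ω)) : ℝ) = A (t : ℕ) := by
    intro t
    have key : (n : ℝ) * ∑ ω : Fin T → Fin n,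
        (inner ℝ (gradient f (x t ω)) (gradient (fi (ω t)) (x t ω)) : ℝ)
        = (n : ℝ) * ∑ ω : Fin T → Fin n, ‖gradient f (x t ω)‖ ^ 2 := by
      rw [← resample_sum t (fun ω => (inner ℝ (gradient f (x t ω)) (gradient (fi (ω t)) (x t ω)) : ℝ)),
        Finset.mul_sum]
      refine Finset.sum_congr rfl fun ω _ => ?_
      have hxup : ∀ j : Fin n, x t (Function.update ω t j) = x t ω := by
        intro j
        apply hdep t t.2.le
        intro s hs
        exact Function.update_of_ne (fun hst => by subst hst; exact lt_irrefl _ hs) _ _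
      have : ∀ j : Fin n,
          (inner ℝ (gradient f (x t (Function.update ω t j)))
            (gradient (fi ((Function.update ω t j) t)) (x t (Function.update ω t j))) : ℝ)
          = inner ℝ (gradient f (x t ω)) (gradient (fi j) (x t ω)) := by
        intro j
        rw [hxup j, Function.update_self]
      rw [Finset.sum_congr rfl (fun j _ => this j), ← inner_sum, hgsum, real_inner_smul_right,
        real_inner_self_eq_norm_sq]
    have := mul_left_cancel₀ (ne_of_gt hn) key
    rw [hA]
    simp only
    rw [← Finset.mul_sum, ← Finset.mul_sum, this]
  -- one-step inequality in expectation
  have hstepE : ∀ t : Fin T, Fv ((t : ℕ) + 1) ≤ Fv (t : ℕ) - η * A (t : ℕ) + L / 2 * η ^ 2 * σ ^ 2 := by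
    intro t
    have hptwise : ∀ ω : Fin T → Fin n, f (x ((t : ℕ) + 1) ω) ≤ f (x (t : ℕ) ω)
        - η * (inner ℝ (gradient f (x t ω)) (gradient (fi (ω t)) (x t ω)) : ℝ)
        + L / 2 * η ^ 2 * σ ^ 2 := by
      intro ω
      have hd := sgd_descent hdifff hlipf (x (t : ℕ) ω) (x ((t : ℕ) + 1) ω)
      rw [hstep t ω] at hd ⊢
      have hsub : x (t : ℕ) ω - η • gradient (fi (ω t)) (x t ω) - x (t : ℕ) ω
          = -(η • gradient (fi (ω t)) (x t ω)) := by abel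
      rw [hsub] at hd
      rw [inner_neg_right, real_inner_smul_right, norm_neg, norm_smul] at hd
      have hnorm : (‖η‖ * ‖gradient (fi (ω t)) (x t ω)‖) ^ 2 ≤ η ^ 2 * σ ^ 2 := by
        rw [mul_pow, Real.norm_eq_abs, sq_abs]
        exact mul_le_mul_of_nonneg_left
          (pow_le_pow_left₀ (norm_nonneg _) (hbound (ω t) (x t ω)) 2) (sq_nonneg η)
      nlinarith [hd]
    calc Fv ((t : ℕ) + 1) = ∑ ω : Fin T → Fin n, w * f (x ((t : ℕ) + 1) ω) := rfl
      _ ≤ ∑ ω : Fin T → Fin n, (w * f (x (t : ℕ) ω)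
            - η * (w * (inner ℝ (gradient f (x t ω)) (gradient (fi (ω t)) (x t ω)) : ℝ))
            + w * (L / 2 * η ^ 2 * σ ^ 2)) := by
          refine Finset.sum_le_sum fun ω _ => ?_
          have := hptwise ω
          nlinarith [hw0, hptwise ω]
      _ = Fv (t : ℕ) - η * A (t : ℕ) + L / 2 * η ^ 2 * σ ^ 2 := by
          have hsum2 : ∑ ω : Fin T → Fin n, η *
              (w * (inner ℝ (gradient f (x t ω)) (gradient (fi (ω t)) (x t ω)) : ℝ))
              = η * A (t : ℕ) := by
            rw [← Finset.mul_sum, hE t]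
          have hsum3 : ∑ _ω : Fin T → Fin n, w * (L / 2 * η ^ 2 * σ ^ 2)
              = L / 2 * η ^ 2 * σ ^ 2 := by
            rw [← Finset.sum_mul, hwsum, one_mul]
          rw [Finset.sum_add_distrib, Finset.sum_sub_distrib, hsum2, hsum3]
  -- telescoping
  have htel : ∀ m : ℕ, m ≤ T → Fv m ≤ Fv 0 - η * ∑ t ∈ Finset.range m, A t
      + m * (L / 2 * η ^ 2 * σ ^ 2) := by
    intro m
    induction m with
    | zero => intro _; simp
    | succ k ih =>
      intro hk
      have hkT : k < T := hk
      have h1 := hstepE ⟨k, hkT⟩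
      simp only [Fin.val_mk] at h1
      have h2 := ih (le_of_lt hkT)
      rw [Finset.sum_range_succ]
      push_cast
      nlinarith [h1, h2]
  have hFv0 : Fv 0 = f x0 := by
    rw [hFv]
    simp only [hx0]
    rw [← Finset.sum_mul, hwsum, one_mul]
  have hFvT : f xstar ≤ Fv T := by
    calc f xstar = ∑ _ω : Fin T → Fin n, w * f xstar := by
          rw [← Finset.sum_mul, hwsum, one_mul]
      _ ≤ Fv T := Finset.sum_le_sum fun ω _ => mul_le_mul_of_nonneg_left (hmin _) hw0
  have hmain : η * ∑ t ∈ Finset.range T, A t ≤ Δ + T * (L / 2 * η ^ 2 * σ ^ 2) := by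
    have := htel T le_rfl
    rw [hFv0] at this
    have := hFvT
    simp only [hΔ]
    linarith [htel T le_rfl, hFvT]
  -- rewrite goal integrals as A t
  have hgoalfun : ∀ t, (∫ ω, ‖gradient f (x t ω)‖ ^ 2 ∂μ) = A t := by
    intro t
    rw [hμ, int_to_sum]
  -- case split
  rcases eq_or_lt_of_le hΔ0 with hΔeq | hΔpos
  · -- Δ = 0 : gradient at x0 is zero
    have hmin0 : ∀ y, f x0 ≤ f y := by
      intro y
      have h' : (0:ℝ) = f x0 - f xstar := by rw [hΔ] at hΔeq; exact hΔeq
      have : f x0 = f xstar := by linarith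
      rw [this]; exact hmin y
    have hgrad0 : gradient f x0 = 0 := by
      have hloc : IsLocalMin f x0 := (isMinOn_univ_iff.mpr hmin0).isLocalMin Filter.univ_mem
      have := hloc.fderiv_eq_zero
      rw [gradient, this]
      simp
    have h0mem : (0 : ℕ) ∈ Finset.range T := Finset.mem_range.mpr (by omega)
    refine le_trans (Finset.inf'_le _ h0mem) ?_
    rw [hgoalfun 0]
    have : A 0 = 0 := by
      rw [hA]
      simp only [hx0, hgrad0]
      simp
    rw [this]
    exact mul_nonneg (Real.sqrt_nonneg _) hσ.le
  · -- Δ > 0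
    obtain ⟨a, ha⟩ : ∃ a : ℝ, a = Real.sqrt Δ := ⟨_, rfl⟩
    obtain ⟨l, hl⟩ : ∃ l : ℝ, l = Real.sqrt L := ⟨_, rfl⟩
    obtain ⟨s, hs⟩ : ∃ s : ℝ, s = Real.sqrt T := ⟨_, rfl⟩
    have ha0 : 0 < a := ha ▸ Real.sqrt_pos.mpr hΔpos
    have hl0 : 0 < l := hl ▸ Real.sqrt_pos.mpr hL
    have hT0 : (0 : ℝ) < T := by positivity
    have hs0 : 0 < s := hs ▸ Real.sqrt_pos.mpr hT0
    have ha2 : a ^ 2 = Δ := by rw [ha]; exact Real.sq_sqrt hΔ0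
    have hl2 : l ^ 2 = L := by rw [hl]; exact Real.sq_sqrt hL.le
    have hs2 : s ^ 2 = (T : ℝ) := by rw [hs]; exact Real.sq_sqrt hT0.le
    have hceq : c = Real.sqrt 2 * a / (l * σ) := by
      rw [hc]
      rw [show 2 * (f x0 - f xstar) / (L * σ ^ 2) = (Real.sqrt 2 * a / (l * σ)) ^ 2 by
        rw [div_pow, mul_pow, mul_pow, Real.sq_sqrt (by norm_num : (2:ℝ) ≥ 0), ha2, hl2]]
      exact Real.sqrt_sq (by positivity)
    have hηeq : η = Real.sqrt 2 * a / (l * σ * s) := by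
      rw [hη, hceq, ← hs]
      field_simp
    have hηpos : 0 < η := by rw [hηeq]; positivity
    set R := Real.sqrt (2 * (f x0 - f xstar) * L / (T : ℝ)) * σ with hR
    have hReq : R = Real.sqrt 2 * a * l * σ / s := by
      rw [hR]
      rw [show 2 * (f x0 - f xstar) * L / (T : ℝ) = (Real.sqrt 2 * a * l / s) ^ 2 by
        rw [div_pow, mul_pow, mul_pow, Real.sq_sqrt (by norm_num : (2:ℝ) ≥ 0), ha2, hl2, hs2]]
      rw [Real.sqrt_sq (by positivity)]
      ring
    have hσT : (0:ℝ) < σ ^ 2 * (T:ℝ) := by positivity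
    have hc2 : c ^ 2 = 2 * Δ / (L * σ ^ 2) := by
      rw [hc]; exact Real.sq_sqrt (by positivity)
    have hη2 : η ^ 2 = 2 * Δ / (L * σ ^ 2 * T) := by
      rw [hη, div_pow, hc2, Real.sq_sqrt hT0.le, div_div]
    have h2 : Real.sqrt 2 ^ 2 = 2 := Real.sq_sqrt (by norm_num)
    have hηR : η * R = 2 * Δ / T := by
      rw [hηeq, hReq, ← ha2, ← hs2]
      field_simp
      linear_combination h2
    have hkey : Δ + T * (L / 2 * η ^ 2 * σ ^ 2) ≤ η * (T * R) := by
      have e1 : (T:ℝ) * (L / 2 * η ^ 2 * σ ^ 2) = Δ := by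
        rw [hη2]; field_simp
      have e2 : η * ((T:ℝ) * R) = 2 * Δ := by
        rw [show η * ((T:ℝ) * R) = (T:ℝ) * (η * R) by ring, hηR]
        field_simp
      rw [e1, e2]; ring_nf; exact le_rfl
    have hsumA : ∑ t ∈ Finset.range T, A t ≤ ∑ _t ∈ Finset.range T, R := by
      rw [Finset.sum_const, Finset.card_range, nsmul_eq_mul]
      exact le_of_mul_le_mul_left (le_trans hmain hkey) hηpos
    obtain ⟨t0, ht0mem, ht0⟩ := Finset.exists_le_of_sum_le
      (Finset.nonempty_range_iff.mpr (by omega)) hsumA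
    refine le_trans (Finset.inf'_le _ ht0mem) ?_
    rw [hgoalfun t0]
    exact ht0
end

section
/- (SVRG variance bound, convex case) If each fᵢ is convex and L-smooth, then the SVRG stochastic gradient v = ∇f_i(x) - ∇f_i(x̃) + ∇f(x̃), with i uniform on [n], satisfies E_i[‖v‖²] ≤ 4L·(f(x) - f(x*) + f(x̃) - f(x*)), where x* minimizes f = (1/n)∑ fᵢ. -/
open RealInnerProductSpace Finset

section aux
variable {d : ℕ}

private lemma svrg_hasDerivAt (f : EuclideanSpace ℝ (Fin d) → ℝ) (hd : Differentiable ℝ f)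
    (a v : EuclideanSpace ℝ (Fin d)) (t : ℝ) :
    HasDerivAt (fun s : ℝ => f (a + s • v)) ⟪gradient f (a + t • v), v⟫ t := by
  have h1 : HasDerivAt (fun s : ℝ => a + s • v) v t := by
    simpa using ((hasDerivAt_id t).smul_const v).const_add a
  have h2 := (hd (a + t • v)).hasGradientAt.hasFDerivAt
  simpa [InnerProductSpace.toDual_apply_apply, Function.comp_def] using h2.comp_hasDerivAt t h1

private lemma svrg_grad_lower (f : EuclideanSpace ℝ (Fin d) → ℝ)
    (hc : ConvexOn ℝ Set.univ f) (hd : Differentiable ℝ f) (a b : EuclideanSpace ℝ (Fin d)) :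
    f a + ⟪gradient f a, b - a⟫ ≤ f b := by
  set g : ℝ → ℝ := fun t => f (a + t • (b - a)) with hgdef
  have gconv : ConvexOn ℝ Set.univ g := by
    have h := hc.comp_affineMap (AffineMap.lineMap a b)
    have he : g = f ∘ (AffineMap.lineMap a b) := by
      funext t
      simp [hgdef, AffineMap.lineMap_apply, add_comm]
    rw [he]
    simpa using h
  have hder := svrg_hasDerivAt f hd a (b - a) 0
  rw [show a + (0:ℝ) • (b - a) = a by simp] at hder
  have hs := gconv.le_slope_of_hasDerivAt (Set.mem_univ 0) (Set.mem_univ 1) zero_lt_one hder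
  have : slope g 0 1 = f b - f a := by
    simp [slope_def_field, hgdef]
  rw [this] at hs
  linarith

private lemma svrg_descent (f : EuclideanSpace ℝ (Fin d) → ℝ) (L : ℝ)
    (hd : Differentiable ℝ f)
    (hlip : ∀ x y, ‖gradient f x - gradient f y‖ ≤ L * ‖x - y‖)
    (a b : EuclideanSpace ℝ (Fin d)) :
    f b ≤ f a + ⟪gradient f a, b - a⟫ + L / 2 * ‖b - a‖ ^ 2 := by
  set v := b - a with hv
  set h : ℝ → ℝ := fun t => f (a + t • v) - t * ⟪gradient f a, v⟫ - L / 2 * t ^ 2 * ‖v‖ ^ 2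
    with hhdef
  have hder : ∀ t, HasDerivAt h
      (⟪gradient f (a + t • v), v⟫ - ⟪gradient f a, v⟫ - L * t * ‖v‖ ^ 2) t := by
    intro t
    have h1 := svrg_hasDerivAt f hd a v t
    have h2 : HasDerivAt (fun t : ℝ => t * ⟪gradient f a, v⟫) ⟪gradient f a, v⟫ t := by
      simpa using (hasDerivAt_id t).mul_const (⟪gradient f a, v⟫ : ℝ)
    have h3 : HasDerivAt (fun t : ℝ => L / 2 * t ^ 2 * ‖v‖ ^ 2) (L * t * ‖v‖ ^ 2) t := by
      have := ((hasDerivAt_pow 2 t).const_mul (L / 2)).mul_const (‖v‖ ^ 2)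
      refine this.congr_deriv ?_
      simp only [show (2:ℕ) - 1 = 1 from rfl, pow_one, Nat.cast_ofNat]
      ring
    exact (h1.sub h2).sub h3
  have hmono : AntitoneOn h (Set.Icc (0:ℝ) 1) := by
    apply antitoneOn_of_deriv_nonpos (convex_Icc 0 1)
    · exact (Differentiable.continuous fun t => (hder t).differentiableAt).continuousOn
    · intro t _
      exact (hder t).differentiableAt.differentiableWithinAt
    · intro t ht
      rw [interior_Icc] at ht
      rw [(hder t).deriv]
      have key : ⟪gradient f (a + t • v) - gradient f a, v⟫ ≤ L * t * ‖v‖ ^ 2 := by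
        calc ⟪gradient f (a + t • v) - gradient f a, v⟫
            ≤ ‖gradient f (a + t • v) - gradient f a‖ * ‖v‖ := real_inner_le_norm _ _
          _ ≤ (L * ‖a + t • v - a‖) * ‖v‖ :=
              mul_le_mul_of_nonneg_right (hlip _ _) (norm_nonneg _)
          _ = L * t * ‖v‖ ^ 2 := by
              rw [show a + t • v - a = t • v by abel, norm_smul]
              simp [abs_of_pos ht.1]
              ring
      rw [inner_sub_left] at key
      linarith
  have h01 := hmono (Set.mem_Icc.mpr ⟨le_refl 0, zero_le_one⟩)
    (Set.mem_Icc.mpr ⟨zero_le_one, le_refl 1⟩) zero_le_one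
  simp only [hhdef, zero_smul, add_zero, one_smul, zero_mul, zero_pow, mul_zero, sub_zero,
    one_mul, one_pow, mul_one] at h01
  have hb : a + v = b := by rw [hv]; abel
  rw [hb] at h01
  linarith

private lemma svrg_key (f : EuclideanSpace ℝ (Fin d) → ℝ) (L : ℝ) (hL : 0 < L)
    (hc : ConvexOn ℝ Set.univ f) (hd : Differentiable ℝ f)
    (hlip : ∀ x y, ‖gradient f x - gradient f y‖ ≤ L * ‖x - y‖)
    (a b : EuclideanSpace ℝ (Fin d)) :
    ‖gradient f a - gradient f b‖ ^ 2 ≤ 2 * L * (f a - f b - ⟪gradient f b, a - b⟫) := by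
  set g := gradient f a - gradient f b with hg
  set z := a - L⁻¹ • g with hz
  have h1 := svrg_grad_lower f hc hd b z
  have h2 := svrg_descent f L hd hlip a z
  have e1 : ⟪gradient f b, z - b⟫ = ⟪gradient f b, a - b⟫ - L⁻¹ * ⟪gradient f b, g⟫ := by
    rw [show z - b = (a - b) - L⁻¹ • g by rw [hz]; abel, inner_sub_right, inner_smul_right]
  have e2 : ⟪gradient f a, z - a⟫ = - (L⁻¹ * ⟪gradient f a, g⟫) := by
    rw [show z - a = -(L⁻¹ • g) by rw [hz]; abel, inner_neg_right, inner_smul_right]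
  have e3 : ‖z - a‖ ^ 2 = L⁻¹ ^ 2 * ‖g‖ ^ 2 := by
    rw [show z - a = -(L⁻¹ • g) by rw [hz]; abel, norm_neg, norm_smul]
    rw [Real.norm_eq_abs, abs_of_pos (inv_pos.mpr hL)]
    ring
  have e4 : ⟪gradient f a, g⟫ - ⟪gradient f b, g⟫ = ‖g‖ ^ 2 := by
    rw [← inner_sub_left, ← hg, real_inner_self_eq_norm_sq]
  rw [e1] at h1
  rw [e2, e3] at h2
  have hL' : (0:ℝ) < L⁻¹ := inv_pos.mpr hL
  have h5 := h1.trans h2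
  have hLne : L ≠ 0 := ne_of_gt hL
  have e5 : L / 2 * (L⁻¹ ^ 2 * ‖g‖ ^ 2) = L⁻¹ * ‖g‖ ^ 2 / 2 := by
    field_simp
  have e6 : L⁻¹ * inner ℝ (gradient f a) g - L⁻¹ * inner ℝ (gradient f b) g
      = L⁻¹ * ‖g‖ ^ 2 := by rw [← mul_sub, e4]
  have key : L⁻¹ * ‖g‖ ^ 2 / 2 ≤ f a - f b - inner ℝ (gradient f b) (a - b) := by
    rw [e5] at h5
    linarith
  have h7 := mul_le_mul_of_nonneg_left key hL.le
  have e7 : L * (L⁻¹ * ‖g‖ ^ 2 / 2) = ‖g‖ ^ 2 / 2 := by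
    field_simp
  linarith

end aux

theorem svrg_variance_convex {d n : ℕ} [NeZero n]
    (fi : Fin n → EuclideanSpace ℝ (Fin d) → ℝ) (L : ℝ) (hL : 0 < L)
    (hconv : ∀ i, ConvexOn ℝ Set.univ (fi i))
    (hdiff : ∀ i, Differentiable ℝ (fi i))
    (hlip : ∀ i x y, ‖gradient (fi i) x - gradient (fi i) y‖ ≤ L * ‖x - y‖)
    (f : EuclideanSpace ℝ (Fin d) → ℝ)
    (hf : f = fun x => (1 / (n : ℝ)) * ∑ i, fi i x)
    (xstar : EuclideanSpace ℝ (Fin d)) (hmin : ∀ y, f xstar ≤ f y)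
    (x xt : EuclideanSpace ℝ (Fin d)) :
    (1 / (n : ℝ)) * ∑ i, ‖gradient (fi i) x - gradient (fi i) xt + gradient f xt‖ ^ 2 ≤
      4 * L * (f x - f xstar + (f xt - f xstar)) := by
  have hn : (n:ℝ) ≠ 0 := Nat.cast_ne_zero.mpr (NeZero.ne n)
  have hn0 : (0:ℝ) < (n:ℝ) := Nat.cast_pos.mpr (Nat.pos_of_ne_zero (NeZero.ne n))
  set G := gradient f xt with hGdef
  set gx := fun i => gradient (fi i) x with hgxdef
  set gT := fun i => gradient (fi i) xt with hgTdef
  set gs := fun i => gradient (fi i) xstar with hgsdef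
  -- gradient of the average
  have hgradf : ∀ y, HasGradientAt f ((1/(n:ℝ)) • ∑ i, gradient (fi i) y) y := by
    intro y
    rw [hasGradientAt_iff_hasFDerivAt]
    have hsum : HasFDerivAt (fun z => ∑ i, fi i z)
        (∑ i, InnerProductSpace.toDual ℝ (EuclideanSpace ℝ (Fin d)) (gradient (fi i) y)) y :=
      HasFDerivAt.fun_sum fun i _ => ((hdiff i) y).hasGradientAt.hasFDerivAt
    have h2 := hsum.const_mul (1/(n:ℝ))
    rw [hf]
    refine h2.congr_fderiv ?_
    simp [map_smul, map_sum]
  have hG : G = (1/(n:ℝ)) • ∑ i, gT i := (hgradf xt).gradient.symm ▸ rfl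
  have hG' : gradient f xt = (1/(n:ℝ)) • ∑ i, gT i := (hgradf xt).gradient
  -- gradient at the minimizer vanishes
  have hgs_sum : ∑ i, gs i = 0 := by
    have hloc : IsLocalMin f xstar := Filter.Eventually.of_forall hmin
    have h0 : gradient f xstar = 0 := by
      rw [gradient, hloc.fderiv_eq_zero, map_zero]
    have h1 : (1/(n:ℝ)) • ∑ i, gs i = 0 := by
      rw [← (hgradf xstar).gradient]; exact h0
    rcases smul_eq_zero.mp h1 with h | h
    · exact absurd h (by simp [hn])
    · exact h
  -- sums of function values
  have hfx : ∑ i, fi i x = (n:ℝ) * f x := by rw [hf]; field_simp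
  have hft : ∑ i, fi i xt = (n:ℝ) * f xt := by rw [hf]; field_simp
  have hfs : ∑ i, fi i xstar = (n:ℝ) * f xstar := by rw [hf]; field_simp
  -- key sums
  have sumA : ∑ i, ‖gx i - gs i‖ ^ 2 ≤ 2 * L * ((n:ℝ) * (f x - f xstar)) := by
    calc ∑ i, ‖gx i - gs i‖ ^ 2
        ≤ ∑ i, 2 * L * (fi i x - fi i xstar - ⟪gs i, x - xstar⟫) :=
          Finset.sum_le_sum fun i _ =>
            svrg_key (fi i) L hL (hconv i) (hdiff i) (hlip i) x xstar
      _ = 2 * L * ((∑ i, fi i x) - (∑ i, fi i xstar) - ⟪∑ i, gs i, x - xstar⟫) := by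
          rw [← Finset.mul_sum, Finset.sum_sub_distrib, Finset.sum_sub_distrib, sum_inner]
      _ = 2 * L * ((n:ℝ) * (f x - f xstar)) := by
          rw [hfx, hfs, hgs_sum, inner_zero_left]; ring
  have sumB : ∑ i, ‖gT i - gs i‖ ^ 2 ≤ 2 * L * ((n:ℝ) * (f xt - f xstar)) := by
    calc ∑ i, ‖gT i - gs i‖ ^ 2
        ≤ ∑ i, 2 * L * (fi i xt - fi i xstar - ⟪gs i, xt - xstar⟫) :=
          Finset.sum_le_sum fun i _ =>
            svrg_key (fi i) L hL (hconv i) (hdiff i) (hlip i) xt xstar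
      _ = 2 * L * ((∑ i, fi i xt) - (∑ i, fi i xstar) - ⟪∑ i, gs i, xt - xstar⟫) := by
          rw [← Finset.mul_sum, Finset.sum_sub_distrib, Finset.sum_sub_distrib, sum_inner]
      _ = 2 * L * ((n:ℝ) * (f xt - f xstar)) := by
          rw [hft, hfs, hgs_sum, inner_zero_left]; ring
  -- variance reduction
  have hsb : ∑ i, (gT i - gs i) = (n:ℝ) • G := by
    rw [Finset.sum_sub_distrib, hgs_sum, sub_zero, hG, smul_smul]
    rw [show (n:ℝ) * (1/(n:ℝ)) = 1 by field_simp, one_smul]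
  have expand : ∑ i, ‖gT i - gs i - G‖ ^ 2
      = (∑ i, ‖gT i - gs i‖ ^ 2) - (n:ℝ) * ‖G‖ ^ 2 := by
    calc ∑ i, ‖gT i - gs i - G‖ ^ 2
        = ∑ i, (‖gT i - gs i‖ ^ 2 - 2 * ⟪gT i - gs i, G⟫ + ‖G‖ ^ 2) :=
          Finset.sum_congr rfl fun i _ => norm_sub_sq_real _ _
      _ = (∑ i, ‖gT i - gs i‖ ^ 2) - 2 * ⟪∑ i, (gT i - gs i), G⟫ + (n:ℝ) * ‖G‖ ^ 2 := by
          rw [Finset.sum_add_distrib, Finset.sum_sub_distrib, ← Finset.mul_sum, sum_inner,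
            Finset.sum_const, Finset.card_univ, Fintype.card_fin, nsmul_eq_mul]
      _ = (∑ i, ‖gT i - gs i‖ ^ 2) - (n:ℝ) * ‖G‖ ^ 2 := by
          rw [hsb, real_inner_smul_left, real_inner_self_eq_norm_sq]; ring
  -- per-index triangle bound
  have tri : ∀ u w : EuclideanSpace ℝ (Fin d), ‖u + w‖ ^ 2 ≤ 2 * ‖u‖ ^ 2 + 2 * ‖w‖ ^ 2 := by
    intro u w
    have h := norm_add_le u w
    nlinarith [norm_nonneg u, norm_nonneg w, norm_nonneg (u + w), sq_nonneg (‖u‖ - ‖w‖)]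
  have perI : ∀ i, ‖gx i - gT i + G‖ ^ 2
      ≤ 2 * ‖gx i - gs i‖ ^ 2 + 2 * ‖gT i - gs i - G‖ ^ 2 := by
    intro i
    have e : gx i - gT i + G = (gx i - gs i) + (G - (gT i - gs i)) := by abel
    rw [e]
    have h := tri (gx i - gs i) (G - (gT i - gs i))
    rwa [norm_sub_rev G] at h
  have total : ∑ i, ‖gx i - gT i + G‖ ^ 2
      ≤ (n:ℝ) * (4 * L * (f x - f xstar + (f xt - f xstar))) := by
    have h1 : ∑ i, ‖gx i - gT i + G‖ ^ 2
        ≤ 2 * (∑ i, ‖gx i - gs i‖ ^ 2) + 2 * (∑ i, ‖gT i - gs i - G‖ ^ 2) := by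
      calc ∑ i, ‖gx i - gT i + G‖ ^ 2
          ≤ ∑ i, (2 * ‖gx i - gs i‖ ^ 2 + 2 * ‖gT i - gs i - G‖ ^ 2) :=
            Finset.sum_le_sum fun i _ => perI i
        _ = 2 * (∑ i, ‖gx i - gs i‖ ^ 2) + 2 * (∑ i, ‖gT i - gs i - G‖ ^ 2) := by
            rw [Finset.sum_add_distrib, Finset.mul_sum, Finset.mul_sum]
    have hG2 : 0 ≤ (n:ℝ) * ‖G‖ ^ 2 := by positivity
    have h2 : ∑ i, ‖gT i - gs i - G‖ ^ 2 ≤ 2 * L * ((n:ℝ) * (f xt - f xstar)) := by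
      rw [expand]; linarith
    calc ∑ i, ‖gx i - gT i + G‖ ^ 2
        ≤ 2 * (2 * L * ((n:ℝ) * (f x - f xstar))) + 2 * (2 * L * ((n:ℝ) * (f xt - f xstar))) := by
          linarith
      _ = (n:ℝ) * (4 * L * (f x - f xstar + (f xt - f xstar))) := by ring
  calc (1 / (n : ℝ)) * ∑ i, ‖gx i - gT i + G‖ ^ 2
      ≤ (1 / (n:ℝ)) * ((n:ℝ) * (4 * L * (f x - f xstar + (f xt - f xstar)))) :=
        mul_le_mul_of_nonneg_left total (by positivity)
    _ = 4 * L * (f x - f xstar + (f xt - f xstar)) := by field_simp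
end

section
/- (SVRG variance bound, nonconvex case) If each fᵢ is L-smooth (not necessarily convex), then the SVRG gradient estimate v = ∇f_i(x) - ∇f_i(x̃) + ∇f(x̃), with i uniform on [n], satisfies E_i[‖v‖²] ≤ 2‖∇f(x)‖² + 2L²‖x - x̃‖². -/
open Finset

lemma grad_avg {d n : ℕ} (fi : Fin n → EuclideanSpace ℝ (Fin d) → ℝ)
    (hdiff : ∀ i, Differentiable ℝ (fi i)) (y : EuclideanSpace ℝ (Fin d)) :
    gradient (fun x => (1 / (n : ℝ)) * ∑ i, fi i x) y
      = (1 / (n : ℝ)) • ∑ i, gradient (fi i) y := by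
  have h1 : fderiv ℝ (fun x => (1 / (n : ℝ)) * ∑ i, fi i x) y
      = (1 / (n : ℝ)) • ∑ i, fderiv ℝ (fi i) y := by
    rw [fderiv_const_mul (by exact Differentiable.fun_sum (fun i _ => hdiff i) y)]
    congr 1
    exact fderiv_fun_sum (fun i _ => (hdiff i y))
  unfold gradient
  rw [h1, map_smul, map_sum]

theorem svrg_variance_nonconvex {d n : ℕ} [NeZero n]
    (fi : Fin n → EuclideanSpace ℝ (Fin d) → ℝ) (L : ℝ) (hL : 0 < L)
    (hdiff : ∀ i, Differentiable ℝ (fi i))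
    (hlip : ∀ i x y, ‖gradient (fi i) x - gradient (fi i) y‖ ≤ L * ‖x - y‖)
    (f : EuclideanSpace ℝ (Fin d) → ℝ)
    (hf : f = fun x => (1 / (n : ℝ)) * ∑ i, fi i x)
    (x xt : EuclideanSpace ℝ (Fin d)) :
    (1 / (n : ℝ)) * ∑ i, ‖gradient (fi i) x - gradient (fi i) xt + gradient f xt‖ ^ 2 ≤
      2 * ‖gradient f x‖ ^ 2 + 2 * L ^ 2 * ‖x - xt‖ ^ 2 := by
  have hn : (0:ℝ) < n := Nat.cast_pos.mpr (Nat.pos_of_ne_zero (NeZero.ne n))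
  set G : Fin n → EuclideanSpace ℝ (Fin d) := fun i => gradient (fi i) x - gradient (fi i) xt
    with hG
  set μ : EuclideanSpace ℝ (Fin d) := gradient f x - gradient f xt with hμ
  have havg : ∀ y, gradient f y = (1 / (n : ℝ)) • ∑ i, gradient (fi i) y := by
    intro y; rw [hf]; exact grad_avg fi hdiff y
  have hsumG : ∑ i, G i = (n : ℝ) • μ := by
    rw [hμ, havg x, havg xt, hG, Finset.sum_sub_distrib, smul_sub, ← smul_assoc, ← smul_assoc]
    simp [smul_smul, mul_one_div, div_self hn.ne']
  -- pointwise bound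
  have hpt : ∀ i, ‖G i + gradient f xt‖ ^ 2
      ≤ 2 * ‖gradient f x‖ ^ 2 + 2 * ‖G i - μ‖ ^ 2 := by
    intro i
    have h1 : G i + gradient f xt = gradient f x + (G i - μ) := by rw [hμ]; abel
    rw [h1]
    have h2 := norm_add_le (gradient f x) (G i - μ)
    have h3 : (0:ℝ) ≤ ‖gradient f x‖ := norm_nonneg _
    have h4 : (0:ℝ) ≤ ‖G i - μ‖ := norm_nonneg _
    have h5 : ‖gradient f x + (G i - μ)‖ ^ 2 ≤ (‖gradient f x‖ + ‖G i - μ‖) ^ 2 := by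
      nlinarith [norm_nonneg (gradient f x + (G i - μ))]
    nlinarith [sq_nonneg (‖gradient f x‖ - ‖G i - μ‖)]
  -- variance bound
  have hvar : ∑ i, ‖G i - μ‖ ^ 2 ≤ ∑ i, ‖G i‖ ^ 2 := by
    have hexp : ∀ i, ‖G i - μ‖ ^ 2 = ‖G i‖ ^ 2 - 2 * inner ℝ (G i) μ + ‖μ‖ ^ 2 := by
      intro i
      rw [norm_sub_sq_real]
    rw [Finset.sum_congr rfl (fun i _ => hexp i)]
    have hinner : ∑ i, inner ℝ (G i) μ = (n : ℝ) * ‖μ‖ ^ 2 := by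
      rw [← sum_inner, hsumG, real_inner_smul_left, real_inner_self_eq_norm_sq]
    rw [Finset.sum_add_distrib, Finset.sum_sub_distrib, ← Finset.mul_sum, hinner]
    simp only [Finset.sum_const, Finset.card_univ, Fintype.card_fin, nsmul_eq_mul]
    nlinarith [sq_nonneg ‖μ‖, Nat.cast_nonneg (α := ℝ) n]
  have hGbound : ∀ i, ‖G i‖ ^ 2 ≤ L ^ 2 * ‖x - xt‖ ^ 2 := by
    intro i
    have := hlip i x xt
    nlinarith [norm_nonneg (G i), norm_nonneg (x - xt), hL.le]
  calc (1 / (n : ℝ)) * ∑ i, ‖G i + gradient f xt‖ ^ 2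
      ≤ (1 / (n : ℝ)) * ∑ i, (2 * ‖gradient f x‖ ^ 2 + 2 * ‖G i - μ‖ ^ 2) := by
        apply mul_le_mul_of_nonneg_left (Finset.sum_le_sum (fun i _ => hpt i))
        positivity
    _ = 2 * ‖gradient f x‖ ^ 2 + (1 / (n : ℝ)) * (2 * ∑ i, ‖G i - μ‖ ^ 2) := by
        rw [Finset.sum_add_distrib, ← Finset.mul_sum]
        field_simp
        rw [Finset.mul_sum]
        simp only [← Finset.mul_sum, ← Finset.sum_mul, Finset.sum_const, Finset.card_univ, Fintype.card_fin, nsmul_eq_mul]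
        ring
    _ ≤ 2 * ‖gradient f x‖ ^ 2 + (1 / (n : ℝ)) * (2 * ∑ i, ‖G i‖ ^ 2) := by
        gcongr
    _ ≤ 2 * ‖gradient f x‖ ^ 2 + (1 / (n : ℝ)) * (2 * ∑ _i : Fin n, L ^ 2 * ‖x - xt‖ ^ 2) := by
        gcongr with i; exact hGbound i
    _ = 2 * ‖gradient f x‖ ^ 2 + 2 * L ^ 2 * ‖x - xt‖ ^ 2 := by
        rw [Finset.sum_const, Finset.card_univ, Fintype.card_fin]
        field_simp
        ring
end

section
/- (Mini-batch SVRG variance bound) If each fᵢ is L-smooth and I is a multiset of b indices drawn i.i.d. uniformly from [n], then u = (1/b)∑_{i∈I}(∇f_i(x) - ∇f_i(x̃)) + ∇f(x̃) satisfies E[‖u‖²] ≤ 2‖∇f(x)‖² + (2L²/b)‖x - x̃‖². -/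
open Finset

lemma marg {E : Type*} [AddCommMonoid E] {b n : ℕ} (j : Fin b) (φ : Fin n → E)
    (h : ∑ i, φ i = 0) : ∑ I : Fin b → Fin n, φ (I j) = 0 := by
  rw [← Equiv.sum_comp (Equiv.funSplitAt j (Fin n)).symm (fun I => φ (I j))]
  simp only [Equiv.funSplitAt_symm_apply, dif_pos rfl]
  rw [Fintype.sum_prod_type]
  simp [Finset.sum_const, ← Finset.smul_sum, h]

lemma key {d n : ℕ} (b : ℕ) (w : Fin n → EuclideanSpace ℝ (Fin d)) (h0 : ∑ i, w i = 0) :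
    (n : ℝ) * ∑ I : Fin b → Fin n, ‖∑ j, w (I j)‖ ^ 2
      = b * (n : ℝ) ^ b * ∑ i, ‖w i‖ ^ 2 := by
  induction b with
  | zero => simp
  | succ b ih =>
    have he : ∑ I : Fin (b+1) → Fin n, ‖∑ j, w (I j)‖ ^ 2
        = ∑ a : Fin n, ∑ I : Fin b → Fin n, ‖w a + ∑ j, w (I j)‖ ^ 2 := by
      rw [← Equiv.sum_comp (Fin.consEquiv (fun _ : Fin (b+1) => Fin n))
        (fun I => ‖∑ j, w (I j)‖ ^ 2), Fintype.sum_prod_type]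
      refine Finset.sum_congr rfl fun a _ => Finset.sum_congr rfl fun I _ => ?_
      congr 1
      simp [Fin.sum_univ_succ, Fin.consEquiv]
    have hcross : ∑ I : Fin b → Fin n, ∑ j, w (I j) = 0 := by
      rw [Finset.sum_comm]
      exact Finset.sum_eq_zero fun j _ => marg j w h0
    have hexp : ∀ a : Fin n, ∑ I : Fin b → Fin n, ‖w a + ∑ j, w (I j)‖ ^ 2
        = (n : ℝ) ^ b * ‖w a‖ ^ 2 + ∑ I : Fin b → Fin n, ‖∑ j, w (I j)‖ ^ 2 := by
      intro a
      have : ∀ I : Fin b → Fin n, ‖w a + ∑ j, w (I j)‖ ^ 2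
          = ‖w a‖ ^ 2 + 2 * inner ℝ (w a) (∑ j, w (I j)) + ‖∑ j, w (I j)‖ ^ 2 :=
        fun I => norm_add_sq_real _ _
      rw [Finset.sum_congr rfl fun I _ => this I]
      rw [Finset.sum_add_distrib, Finset.sum_add_distrib]
      have h1 : ∑ _I : Fin b → Fin n, ‖w a‖ ^ 2 = (n:ℝ)^b * ‖w a‖^2 := by
        simp [Finset.sum_const, Fintype.card_fun, mul_comm]
      have h2 : ∑ I : Fin b → Fin n, 2 * inner ℝ (w a) (∑ j, w (I j)) = (0:ℝ) := by
        rw [← Finset.mul_sum, ← inner_sum, hcross, inner_zero_right, mul_zero]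
      rw [h1, h2]; ring
    rw [he, Finset.sum_congr rfl fun a _ => hexp a, Finset.sum_add_distrib,
      ← Finset.mul_sum, Finset.sum_const]
    simp only [Finset.card_univ, Fintype.card_fin, nsmul_eq_mul]
    rw [mul_add]
    rw [show (n:ℝ) * ((n:ℝ) * ∑ I : Fin b → Fin n, ‖∑ j, w (I j)‖^2)
        = (n:ℝ) * ((b:ℝ) * (n:ℝ)^b * ∑ i, ‖w i‖^2) from by rw [ih]]
    push_cast
    ring

lemma gradf {d n : ℕ} (fi : Fin n → EuclideanSpace ℝ (Fin d) → ℝ)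
    (hdiff : ∀ i, Differentiable ℝ (fi i)) (y : EuclideanSpace ℝ (Fin d)) :
    gradient (fun z => (1 / (n : ℝ)) * ∑ i, fi i z) y
      = (1 / (n : ℝ)) • ∑ i, gradient (fi i) y := by
  unfold gradient
  have h1 : fderiv ℝ (fun z => (1 / (n : ℝ)) * ∑ i, fi i z) y
      = (1 / (n : ℝ)) • ∑ i, fderiv ℝ (fi i) y := by
    rw [fderiv_const_mul (by exact (Differentiable.fun_sum fun i _ => hdiff i).differentiableAt)]
    congr 1
    exact fderiv_fun_sum fun i _ => (hdiff i).differentiableAt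
  rw [h1, map_smul, map_sum]

lemma aux {d n b : ℕ} (hn : 0 < n) (hb : 0 < b)
    (g : Fin n → EuclideanSpace ℝ (Fin d)) (c : EuclideanSpace ℝ (Fin d)) :
    (1 / (n : ℝ) ^ b) * ∑ I : Fin b → Fin n,
        ‖(1 / (b : ℝ)) • (∑ j, g (I j)) + (c - (1 / (n : ℝ)) • ∑ i, g i)‖ ^ 2
      ≤ 2 * ‖c‖ ^ 2 + (2 / ((b : ℝ) * n)) * ∑ i, ‖g i‖ ^ 2 := by
  have hnR : (0:ℝ) < n := by exact_mod_cast hn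
  have hbR : (0:ℝ) < b := by exact_mod_cast hb
  have hnbR : (0:ℝ) < (n:ℝ) ^ b := by positivity
  set μ : EuclideanSpace ℝ (Fin d) := (1 / (n : ℝ)) • ∑ i, g i with hμ
  set w : Fin n → EuclideanSpace ℝ (Fin d) := fun i => g i - μ with hwdef
  have hsum_g : ∑ i, g i = (n : ℝ) • μ := by
    rw [hμ, smul_smul, mul_one_div, div_self hnR.ne', one_smul]
  have hw0 : ∑ i, w i = 0 := by
    simp only [hwdef, Finset.sum_sub_distrib, Finset.sum_const, Finset.card_univ,
      Fintype.card_fin, hsum_g]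
    rw [← Nat.cast_smul_eq_nsmul ℝ, sub_self]
  -- rewrite summand
  have hrw : ∀ I : Fin b → Fin n,
      (1 / (b : ℝ)) • (∑ j, g (I j)) + (c - μ)
        = (1 / (b : ℝ)) • (∑ j, w (I j)) + c := by
    intro I
    have h1 : ∑ j, g (I j) = ∑ j, w (I j) + (b : ℝ) • μ := by
      simp only [hwdef, Finset.sum_sub_distrib, Finset.sum_const, Finset.card_univ,
        Fintype.card_fin]
      rw [← Nat.cast_smul_eq_nsmul ℝ]
      abel
    rw [h1, smul_add, smul_smul, one_div, inv_mul_cancel₀ hbR.ne', one_smul]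
    abel
  have hpt : ∀ I : Fin b → Fin n,
      ‖(1 / (b : ℝ)) • (∑ j, w (I j)) + c‖ ^ 2
        ≤ 2 * ((1 / (b : ℝ)) ^ 2 * ‖∑ j, w (I j)‖ ^ 2) + 2 * ‖c‖ ^ 2 := by
    intro I
    have hA : ‖(1 / (b : ℝ)) • (∑ j, w (I j))‖ = (1 / (b : ℝ)) * ‖∑ j, w (I j)‖ := by
      rw [norm_smul, Real.norm_eq_abs, abs_of_pos (by positivity)]
    have h2 := norm_add_le ((1 / (b : ℝ)) • (∑ j, w (I j))) c
    have h3 : ‖(1 / (b : ℝ)) • (∑ j, w (I j)) + c‖ ^ 2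
        ≤ (‖(1 / (b : ℝ)) • (∑ j, w (I j))‖ + ‖c‖) ^ 2 :=
      pow_le_pow_left₀ (norm_nonneg _) h2 2
    have hA2 : ‖(1 / (b : ℝ)) • (∑ j, w (I j))‖ ^ 2
        = (1 / (b : ℝ)) ^ 2 * ‖∑ j, w (I j)‖ ^ 2 := by rw [hA]; ring
    nlinarith [sq_nonneg (‖(1 / (b : ℝ)) • (∑ j, w (I j))‖ - ‖c‖), hA2]
  have hT := key b w hw0
  set T : ℝ := ∑ I : Fin b → Fin n, ‖∑ j, w (I j)‖ ^ 2 with hTdef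
  set W : ℝ := ∑ i, ‖w i‖ ^ 2 with hWdef
  have hWle : W ≤ ∑ i, ‖g i‖ ^ 2 := by
    have hexp : W = ∑ i, ‖g i‖ ^ 2 - 2 * inner ℝ (∑ i, g i) μ + (n : ℝ) * ‖μ‖ ^ 2 := by
      rw [hWdef]
      simp only [hwdef, norm_sub_sq_real]
      rw [Finset.sum_add_distrib, Finset.sum_sub_distrib, ← Finset.mul_sum, ← sum_inner,
        Finset.sum_const, Finset.card_univ, Fintype.card_fin, nsmul_eq_mul]
    rw [hexp, hsum_g, real_inner_smul_left, real_inner_self_eq_norm_sq]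
    nlinarith [sq_nonneg ‖μ‖]
  calc (1 / (n : ℝ) ^ b) * ∑ I : Fin b → Fin n,
        ‖(1 / (b : ℝ)) • (∑ j, g (I j)) + (c - μ)‖ ^ 2
      = (1 / (n : ℝ) ^ b) * ∑ I : Fin b → Fin n,
        ‖(1 / (b : ℝ)) • (∑ j, w (I j)) + c‖ ^ 2 := by
        congr 1; exact Finset.sum_congr rfl fun I _ => by rw [hrw I]
    _ ≤ (1 / (n : ℝ) ^ b) * ∑ I : Fin b → Fin n,
        (2 * ((1 / (b : ℝ)) ^ 2 * ‖∑ j, w (I j)‖ ^ 2) + 2 * ‖c‖ ^ 2) := by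
        apply mul_le_mul_of_nonneg_left (Finset.sum_le_sum fun I _ => hpt I) (by positivity)
    _ = (1 / (n : ℝ) ^ b) * (2 * (1 / (b : ℝ)) ^ 2 * T + (n : ℝ) ^ b * (2 * ‖c‖ ^ 2)) := by
        rw [Finset.sum_add_distrib, Finset.sum_const, Finset.card_univ, Fintype.card_fun,
          Fintype.card_fin, Fintype.card_fin, nsmul_eq_mul]
        push_cast
        rw [hTdef]
        simp only [← Finset.mul_sum]
        ring
    _ = 2 / ((b : ℝ) * n) * W + 2 * ‖c‖ ^ 2 := by
        have hTval : T = (b : ℝ) * (n : ℝ) ^ b * W / n := by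
          field_simp
          linarith [hT]
        rw [hTval]
        field_simp
    _ ≤ 2 * ‖c‖ ^ 2 + (2 / ((b : ℝ) * n)) * ∑ i, ‖g i‖ ^ 2 := by
        have := mul_le_mul_of_nonneg_left hWle (by positivity : (0:ℝ) ≤ 2 / ((b:ℝ) * n))
        linarith

theorem minibatch_svrg_variance {d n b : ℕ} [NeZero n] (hb : 0 < b)
    (fi : Fin n → EuclideanSpace ℝ (Fin d) → ℝ) (L : ℝ) (hL : 0 < L)
    (hdiff : ∀ i, Differentiable ℝ (fi i))
    (hlip : ∀ i x y, ‖gradient (fi i) x - gradient (fi i) y‖ ≤ L * ‖x - y‖)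
    (f : EuclideanSpace ℝ (Fin d) → ℝ)
    (hf : f = fun x => (1 / (n : ℝ)) * ∑ i, fi i x)
    (x xt : EuclideanSpace ℝ (Fin d)) :
    (1 / (n : ℝ) ^ b) * ∑ I : Fin b → Fin n,
        ‖(1 / (b : ℝ)) • (∑ j, (gradient (fi (I j)) x - gradient (fi (I j)) xt))
            + gradient f xt‖ ^ 2 ≤
      2 * ‖gradient f x‖ ^ 2 + 2 * L ^ 2 / b * ‖x - xt‖ ^ 2 := by
  have hn : 0 < n := Nat.pos_of_ne_zero (NeZero.ne n)
  have hnR : (0:ℝ) < n := by exact_mod_cast hn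
  have hbR : (0:ℝ) < b := by exact_mod_cast hb
  have hgrad : ∀ y, gradient f y = (1 / (n : ℝ)) • ∑ i, gradient (fi i) y := by
    intro y; rw [hf]; exact gradf fi hdiff y
  have hμ : gradient f xt
      = gradient f x - (1 / (n : ℝ)) • ∑ i, (gradient (fi i) x - gradient (fi i) xt) := by
    rw [Finset.sum_sub_distrib, smul_sub, ← hgrad, ← hgrad]
    abel
  have hmain := aux (d := d) hn hb
    (fun i => gradient (fi i) x - gradient (fi i) xt) (gradient f x)
  rw [hμ]
  calc (1 / (n : ℝ) ^ b) * ∑ I : Fin b → Fin n,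
        ‖(1 / (b : ℝ)) • (∑ j, (gradient (fi (I j)) x - gradient (fi (I j)) xt))
            + (gradient f x
              - (1 / (n : ℝ)) • ∑ i, (gradient (fi i) x - gradient (fi i) xt))‖ ^ 2
      ≤ 2 * ‖gradient f x‖ ^ 2 + (2 / ((b : ℝ) * n))
          * ∑ i, ‖gradient (fi i) x - gradient (fi i) xt‖ ^ 2 := hmain
    _ ≤ 2 * ‖gradient f x‖ ^ 2 + 2 * L ^ 2 / b * ‖x - xt‖ ^ 2 := by
        have h1 : ∑ i, ‖gradient (fi i) x - gradient (fi i) xt‖ ^ 2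
            ≤ (n : ℝ) * (L ^ 2 * ‖x - xt‖ ^ 2) := by
          calc ∑ i, ‖gradient (fi i) x - gradient (fi i) xt‖ ^ 2
              ≤ ∑ _i : Fin n, (L * ‖x - xt‖) ^ 2 :=
                Finset.sum_le_sum fun i _ =>
                  pow_le_pow_left₀ (norm_nonneg _) (hlip i x xt) 2
            _ = (n : ℝ) * (L ^ 2 * ‖x - xt‖ ^ 2) := by
                rw [Finset.sum_const, Finset.card_univ, Fintype.card_fin, nsmul_eq_mul]
                ring
        have h2 := mul_le_mul_of_nonneg_left h1
          (by positivity : (0:ℝ) ≤ 2 / ((b:ℝ) * n))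
        have h3 : 2 / ((b:ℝ) * n) * ((n : ℝ) * (L ^ 2 * ‖x - xt‖ ^ 2))
            = 2 * L ^ 2 / b * ‖x - xt‖ ^ 2 := by
          field_simp
        linarith
end

section
/- For real sequences defined by c_m = 0 and c_t = c_{t+1}(1 + ηβ + 2η²L²) + η²L³ for t < m, where η = μ₀/(L n^α), β = L/n^{α/2}, m = ⌊n^{3α/2}/(3μ₀)⌋, with 0 < μ₀ ≤ 1, 0 < α ≤ 1, L > 0, n ≥ 1, one has c₀ ≤ μ₀ L (e - 1) / n^{α/2}. -/
set_option maxHeartbeats 800000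


theorem svrg_c0_bound (n : ℕ) (hn : 1 ≤ n) (L μ0 α : ℝ)
    (hL : 0 < L) (hμ0 : 0 < μ0) (hμ0' : μ0 ≤ 1) (hα : 0 < α) (hα' : α ≤ 1)
    (η β : ℝ) (hη : η = μ0 / (L * (n : ℝ) ^ α)) (hβ : β = L / (n : ℝ) ^ (α / 2))
    (m : ℕ) (hm : m = ⌊(n : ℝ) ^ (3 * α / 2) / (3 * μ0)⌋₊)
    (c : ℕ → ℝ) (hcm : c m = 0)
    (hrec : ∀ t < m, c t = c (t + 1) * (1 + η * β + 2 * η ^ 2 * L ^ 2) + η ^ 2 * L ^ 3) :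
    c 0 ≤ μ0 * L * (Real.exp 1 - 1) / (n : ℝ) ^ (α / 2) := by
  have hN0 : (0:ℝ) < (n:ℝ) := by exact_mod_cast hn
  have hN1 : (1:ℝ) ≤ (n:ℝ) := by exact_mod_cast hn
  set s : ℝ := (n:ℝ) ^ (α / 2) with hs
  clear_value s
  have hs1 : 1 ≤ s := by rw [hs]; exact Real.one_le_rpow hN1 (by positivity)
  have hs0 : 0 < s := lt_of_lt_of_le one_pos hs1
  have hNα : (n:ℝ) ^ α = s ^ 2 := by
    rw [hs, ← Real.rpow_natCast ((n:ℝ) ^ (α/2)) 2, ← Real.rpow_mul hN0.le]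
    norm_num
  have hN3 : (n:ℝ) ^ (3 * α / 2) = s ^ 3 := by
    rw [hs, ← Real.rpow_natCast ((n:ℝ) ^ (α/2)) 3, ← Real.rpow_mul hN0.le]
    norm_num; ring_nf
  set θ : ℝ := η * β + 2 * η ^ 2 * L ^ 2 with hθdef
  clear_value θ
  have hη0 : 0 < η := by rw [hη]; positivity
  have hβ0 : 0 < β := by rw [hβ]; positivity
  have hθ0 : 0 ≤ θ := by rw [hθdef]; positivity
  have hηval : η = μ0 / (L * s ^ 2) := by rw [hη, hNα]
  have hβval : β = L / s := hβ
  have hθval : θ = (μ0 * s + 2 * μ0 ^ 2) / s ^ 4 := by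
    rw [hθdef, hηval, hβval]
    field_simp
  have hmle : (m : ℝ) ≤ s ^ 3 / (3 * μ0) := by
    rw [hm, ← hN3]
    exact Nat.floor_le (by positivity)
  set A : ℝ := η ^ 2 * L ^ 3 with hA
  clear_value A
  have hA0 : 0 ≤ A := by rw [hA]; positivity
  -- key induction
  have key : ∀ k, k ≤ m → c (m - k) ≤ A * k * (1 + θ) ^ k := by
    intro k
    induction k with
    | zero => intro _; simp [hcm]
    | succ k ih =>
      intro hk
      have hk' := Nat.le_of_succ_le hk
      have h1 : m - (k + 1) < m := by omega
      have h2 : m - (k + 1) + 1 = m - k := by omega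
      have hr := hrec _ h1
      rw [h2] at hr
      have ihk := ih hk'
      have h1θ : (0:ℝ) ≤ 1 + θ := by linarith
      have hpow1 : (1:ℝ) ≤ (1 + θ) ^ (k + 1) := one_le_pow₀ (by linarith)
      have hθeq : (1 + η * β + 2 * η ^ 2 * L ^ 2) = 1 + θ := by rw [hθdef]; ring
      rw [hr, hθeq]
      push_cast
      have e1 : c (m - k) * (1 + θ) ≤ A * k * (1 + θ) ^ k * (1 + θ) :=
        mul_le_mul_of_nonneg_right ihk h1θ
      have e2 : A ≤ A * (1 + θ) ^ (k + 1) := le_mul_of_one_le_right hA0 hpow1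
      have e3 : A * (k:ℝ) * (1 + θ) ^ k * (1 + θ) = A * (k:ℝ) * (1 + θ) ^ (k + 1) := by
        rw [pow_succ]; ring
      nlinarith [e1, e2, e3]
  have h0 := key m le_rfl
  rw [Nat.sub_self] at h0
  -- bound (1+θ)^m ≤ exp 1
  have hθm : θ * m ≤ 1 := by
    have h1 : θ * m ≤ θ * (s ^ 3 / (3 * μ0)) :=
      mul_le_mul_of_nonneg_left hmle hθ0
    have h2 : θ * (s ^ 3 / (3 * μ0)) = (s + 2 * μ0) / (3 * s) := by
      rw [hθval]; field_simp
    have h3 : (s + 2 * μ0) / (3 * s) ≤ 1 := by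
      rw [div_le_one (by positivity)]
      linarith
    have h4 : θ * (m:ℝ) ≤ (s + 2 * μ0) / (3 * s) := by rw [← h2]; exact h1
    exact h4.trans h3
  have hexp : (1 + θ) ^ m ≤ Real.exp 1 := by
    calc (1 + θ) ^ m ≤ (Real.exp θ) ^ m := by
          apply pow_le_pow_left₀ (by linarith)
          linarith [Real.add_one_le_exp θ]
      _ = Real.exp (θ * m) := by
          rw [← Real.exp_nat_mul]; ring_nf
      _ ≤ Real.exp 1 := Real.exp_le_exp.mpr hθm
  -- bound A * m
  have hAm : A * m ≤ μ0 * L / (3 * s) := by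
    have hAval : A = μ0 ^ 2 * L / s ^ 4 := by
      rw [hA, hηval]; field_simp
    have : A * m ≤ A * (s ^ 3 / (3 * μ0)) := mul_le_mul_of_nonneg_left hmle hA0
    calc A * m ≤ A * (s ^ 3 / (3 * μ0)) := this
      _ = μ0 * L / (3 * s) := by rw [hAval]; field_simp
  have hexp32 : (3:ℝ) / 2 ≤ Real.exp 1 := by
    have := Real.exp_one_gt_d9
    linarith
  have hcalc : c 0 ≤ A * m * Real.exp 1 := by
    calc c 0 ≤ A * m * (1 + θ) ^ m := h0
      _ ≤ A * m * Real.exp 1 := by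
          apply mul_le_mul_of_nonneg_left hexp
          positivity
  have hfin : A * m * Real.exp 1 ≤ μ0 * L * (Real.exp 1 - 1) / s := by
    have h1 : A * m * Real.exp 1 ≤ μ0 * L / (3 * s) * Real.exp 1 :=
      mul_le_mul_of_nonneg_right hAm (Real.exp_pos 1).le
    have he3 : Real.exp 1 ≤ 3 * (Real.exp 1 - 1) := by
      have := Real.exp_one_gt_d9; linarith
    have h2 : μ0 * L / (3 * s) * Real.exp 1 ≤ μ0 * L / (3 * s) * (3 * (Real.exp 1 - 1)) :=
      mul_le_mul_of_nonneg_left he3 (by positivity)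
    have h3 : μ0 * L / (3 * s) * (3 * (Real.exp 1 - 1)) = μ0 * L * (Real.exp 1 - 1) / s := by
      field_simp
    linarith
  linarith
end

section
/- (Per-iteration SVRG Lyapunov descent) Let f = (1/n)∑ fᵢ with each fᵢ L-smooth. Fix x̃ and let g = ∇f(x̃). For x ∈ ℝ^d let x⁺ = x - η v where v = ∇f_i(x) - ∇f_i(x̃) + g with i uniform on [n]. For constants c⁺, β > 0 set c = c⁺(1 + ηβ + 2η²L²) + η²L³ and Γ = η - c⁺η/β - η²L - 2c⁺η². Then E_i[f(x⁺) + c⁺‖x⁺ - x̃‖²] ≤ f(x) + c‖x - x̃‖² - Γ‖∇f(x)‖². -/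
set_option maxHeartbeats 1000000

open RealInnerProductSpace Finset

variable {F : Type*} [NormedAddCommGroup F] [InnerProductSpace ℝ F] [CompleteSpace F]

lemma hasGradientAt_avg {n : ℕ} (fi : Fin n → F → ℝ) (y : F)
    (hdiff : ∀ i, DifferentiableAt ℝ (fi i) y) :
    HasGradientAt (fun x => (1 / (n : ℝ)) * ∑ i, fi i x)
      ((1 / (n : ℝ)) • ∑ i, gradient (fi i) y) y := by
  have h1 : HasFDerivAt (fun x => ∑ i, fi i x)
      (∑ i, InnerProductSpace.toDual ℝ F (gradient (fi i) y)) y :=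
    HasFDerivAt.fun_sum fun i _ => ((hdiff i).hasGradientAt).hasFDerivAt
  have h2 := h1.const_mul ((1 : ℝ) / n)
  rw [hasGradientAt_iff_hasFDerivAt, map_smul, map_sum]
  exact h2

lemma descent_lemma (f : F → ℝ) (hf : Differentiable ℝ f) (L : ℝ)
    (hlip : ∀ a b, ‖gradient f a - gradient f b‖ ≤ L * ‖a - b‖) (x y : F) :
    f y ≤ f x + ⟪gradient f x, y - x⟫ + L / 2 * ‖y - x‖ ^ 2 := by
  set u := y - x with hu
  have hline : ∀ t : ℝ, HasDerivAt (fun t : ℝ => x + t • u) u t := fun t => by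
    simpa using ((hasDerivAt_id t).smul_const u).const_add x
  have hφ : ∀ t : ℝ, HasDerivAt (fun t : ℝ => f (x + t • u))
      ⟪gradient f (x + t • u), u⟫ t := fun t => by
    have hg := ((hf (x + t • u)).hasGradientAt).hasFDerivAt
    have := hg.comp_hasDerivAt t (hline t)
    simpa [InnerProductSpace.toDual_apply_apply, Function.comp_def] using this
  set ψ : ℝ → ℝ := fun t => f (x + t • u) - t * ⟪gradient f x, u⟫ - L / 2 * t ^ 2 * ‖u‖ ^ 2
    with hψdef
  have hψ : ∀ t : ℝ, HasDerivAt ψ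
      (⟪gradient f (x + t • u), u⟫ - ⟪gradient f x, u⟫ - L * t * ‖u‖ ^ 2) t := by
    intro t
    have h1 : HasDerivAt (fun t : ℝ => t * ⟪gradient f x, u⟫) ⟪gradient f x, u⟫ t :=
      hasDerivAt_mul_const _
    have h2 : HasDerivAt (fun t : ℝ => L / 2 * t ^ 2 * ‖u‖ ^ 2) (L * t * ‖u‖ ^ 2) t := by
      have := ((hasDerivAt_pow 2 t).const_mul (L / 2)).mul_const (‖u‖ ^ 2)
      exact this.congr_deriv (by rw [show (2:ℕ) - 1 = 1 from rfl]; push_cast; ring)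
    exact ((hφ t).sub h1).sub h2
  have hmono : AntitoneOn ψ (Set.Icc 0 1) := by
    apply antitoneOn_of_deriv_nonpos (convex_Icc 0 1)
    · exact fun t _ => ((hψ t).continuousAt).continuousWithinAt
    · exact fun t _ => ((hψ t).differentiableAt).differentiableWithinAt
    · intro t ht
      rw [interior_Icc] at ht
      rw [(hψ t).deriv]
      have hb : ⟪gradient f (x + t • u) - gradient f x, u⟫ ≤ L * t * ‖u‖ ^ 2 := by
        calc ⟪gradient f (x + t • u) - gradient f x, u⟫
            ≤ ‖gradient f (x + t • u) - gradient f x‖ * ‖u‖ := real_inner_le_norm _ _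
          _ ≤ (L * ‖(x + t • u) - x‖) * ‖u‖ := by
              apply mul_le_mul_of_nonneg_right (hlip _ _) (norm_nonneg _)
          _ = L * t * ‖u‖ ^ 2 := by
              rw [add_sub_cancel_left, norm_smul, Real.norm_eq_abs,
                abs_of_nonneg ht.1.le]; ring
      rw [inner_sub_left] at hb
      linarith
  have := hmono (Set.mem_Icc.2 ⟨le_refl 0, zero_le_one⟩)
    (Set.mem_Icc.2 ⟨zero_le_one, le_refl 1⟩) zero_le_one
  simp only [hψdef] at this
  norm_num at this
  have hxy : x + u = y := by rw [hu]; abel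
  rw [hxy] at this
  have hgx : ⟪gradient f x, u⟫ = fderiv ℝ f x u := by simp [gradient]
  linarith

theorem svrg_lyapunov_descent {d n : ℕ} [NeZero n]
    (fi : Fin n → EuclideanSpace ℝ (Fin d) → ℝ) (L : ℝ) (hL : 0 < L)
    (hdiff : ∀ i, Differentiable ℝ (fi i))
    (hlip : ∀ i x y, ‖gradient (fi i) x - gradient (fi i) y‖ ≤ L * ‖x - y‖)
    (f : EuclideanSpace ℝ (Fin d) → ℝ)
    (hf : f = fun x => (1 / (n : ℝ)) * ∑ i, fi i x)
    (xt : EuclideanSpace ℝ (Fin d))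
    (η β cplus c Γ : ℝ) (hη : 0 < η) (hβ : 0 < β) (hcplus : 0 < cplus)
    (hc : c = cplus * (1 + η * β + 2 * η ^ 2 * L ^ 2) + η ^ 2 * L ^ 3)
    (hΓ : Γ = η - cplus * η / β - η ^ 2 * L - 2 * cplus * η ^ 2)
    (x : EuclideanSpace ℝ (Fin d)) :
    (1 / (n : ℝ)) * ∑ i,
        (f (x - η • (gradient (fi i) x - gradient (fi i) xt + gradient f xt)) +
          cplus * ‖(x - η • (gradient (fi i) x - gradient (fi i) xt + gradient f xt)) - xt‖ ^ 2) ≤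
      f x + c * ‖x - xt‖ ^ 2 - Γ * ‖gradient f x‖ ^ 2 := by
  have hn : (0 : ℝ) < (n : ℝ) := by
    exact_mod_cast Nat.pos_of_ne_zero (NeZero.ne n)
  set N : ℝ := (n : ℝ) with hN
  -- gradient of the average
  have hgradf : ∀ y, gradient f y = (1 / N) • ∑ i, gradient (fi i) y := by
    intro y
    rw [hf]
    exact (hasGradientAt_avg fi y fun i => (hdiff i) y).gradient
  have hfdiff : Differentiable ℝ f := by
    intro y
    rw [hf]
    exact (hasGradientAt_avg fi y fun i => (hdiff i) y).differentiableAt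
  have hflip : ∀ a b, ‖gradient f a - gradient f b‖ ≤ L * ‖a - b‖ := by
    intro a b
    rw [hgradf a, hgradf b, ← smul_sub, ← Finset.sum_sub_distrib]
    calc ‖(1 / N) • ∑ i, (gradient (fi i) a - gradient (fi i) b)‖
        = (1 / N) * ‖∑ i, (gradient (fi i) a - gradient (fi i) b)‖ := by
          rw [norm_smul, Real.norm_eq_abs, abs_of_pos (by positivity)]
      _ ≤ (1 / N) * ∑ i, ‖gradient (fi i) a - gradient (fi i) b‖ := by
          apply mul_le_mul_of_nonneg_left (norm_sum_le _ _) (by positivity)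
      _ ≤ (1 / N) * ∑ _i : Fin n, L * ‖a - b‖ := by
          apply mul_le_mul_of_nonneg_left (Finset.sum_le_sum fun i _ => hlip i a b)
            (by positivity)
      _ = L * ‖a - b‖ := by
          rw [Finset.sum_const, Finset.card_univ, Fintype.card_fin, nsmul_eq_mul]
          field_simp
          rfl
  set G := gradient f x with hG
  set Gt := gradient f xt with hGt
  set v : Fin n → EuclideanSpace ℝ (Fin d) :=
    fun i => gradient (fi i) x - gradient (fi i) xt + Gt with hv
  have hvi : ∀ i, gradient (fi i) x - gradient (fi i) xt + Gt = v i := fun i => rfl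
  simp only [hvi]
  set Z : Fin n → EuclideanSpace ℝ (Fin d) :=
    fun i => gradient (fi i) x - gradient (fi i) xt with hZ
  set m := G - Gt with hm
  have hNs : ∀ z : EuclideanSpace ℝ (Fin d), N • ((1 / N) • z) = z := fun z => by
    rw [smul_smul, mul_one_div, div_self hn.ne', one_smul]
  have hsx : ∑ i, gradient (fi i) x = N • G := by
    rw [hG, hgradf x, hNs]
  have hsxt : ∑ i, gradient (fi i) xt = N • Gt := by
    rw [hGt, hgradf xt, hNs]
  have hsumZ : ∑ i, Z i = N • m := by
    rw [hZ, Finset.sum_sub_distrib, hsx, hsxt, hm, smul_sub]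
  have hsumv : ∑ i, v i = N • G := by
    have : ∑ i, v i = ∑ i, Z i + (n : ℕ) • Gt := by
      simp [hv, hZ, Finset.sum_add_distrib, Finset.card_univ]
    rw [this, hsumZ, ← Nat.cast_smul_eq_nsmul ℝ n Gt, ← hN, hm, smul_sub]
    abel
  have hA : ∑ i, ⟪G, v i⟫ = N * ‖G‖ ^ 2 := by
    rw [← inner_sum, hsumv, real_inner_smul_right, real_inner_self_eq_norm_sq]
  have hB : ∑ i, ⟪v i, x - xt⟫ = N * ⟪G, x - xt⟫ := by
    rw [← sum_inner, hsumv, real_inner_smul_left]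
  have hZnorm : ∀ i, ‖Z i‖ ^ 2 ≤ L ^ 2 * ‖x - xt‖ ^ 2 := by
    intro i
    have h := hlip i x xt
    have h2 := pow_le_pow_left₀ (norm_nonneg (Z i)) h 2
    rwa [mul_pow] at h2
  have hvar : ∑ i, ‖v i - G‖ ^ 2 ≤ N * (L ^ 2 * ‖x - xt‖ ^ 2) := by
    have hvg : ∀ i, v i - G = Z i - m := fun i => by
      rw [hv, hZ, hm]; exact (sub_sub_eq_add_sub _ _ _).symm
    have e1 : ∑ i, ‖v i - G‖ ^ 2
        = ∑ i, ‖Z i‖ ^ 2 - 2 * ⟪∑ i, Z i, m⟫ + N * ‖m‖ ^ 2 := by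
      simp only [hvg, norm_sub_sq_real]
      rw [Finset.sum_add_distrib, Finset.sum_sub_distrib, Finset.sum_const,
        Finset.card_univ, Fintype.card_fin, nsmul_eq_mul, sum_inner, ← Finset.mul_sum]
    rw [e1, hsumZ, real_inner_smul_left, real_inner_self_eq_norm_sq]
    have h2 : ∑ i, ‖Z i‖ ^ 2 ≤ N * (L ^ 2 * ‖x - xt‖ ^ 2) := by
      calc ∑ i, ‖Z i‖ ^ 2 ≤ ∑ _i : Fin n, L ^ 2 * ‖x - xt‖ ^ 2 :=
            Finset.sum_le_sum fun i _ => hZnorm i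
        _ = N * (L ^ 2 * ‖x - xt‖ ^ 2) := by
            rw [Finset.sum_const, Finset.card_univ, Fintype.card_fin, nsmul_eq_mul]
    nlinarith [sq_nonneg ‖m‖, hn]
  have hS : ∑ i, ‖v i‖ ^ 2 ≤ N * (2 * ‖G‖ ^ 2 + 2 * (L ^ 2 * ‖x - xt‖ ^ 2)) := by
    have hptw : ∀ i, ‖v i‖ ^ 2 ≤ 2 * ‖G‖ ^ 2 + 2 * ‖v i - G‖ ^ 2 := by
      intro i
      have h1 : ‖v i‖ ≤ ‖G‖ + ‖v i - G‖ := by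
        calc ‖v i‖ = ‖G + (v i - G)‖ := by rw [add_sub_cancel]
          _ ≤ ‖G‖ + ‖v i - G‖ := norm_add_le _ _
      nlinarith [sq_nonneg (‖G‖ - ‖v i - G‖), norm_nonneg (v i), norm_nonneg G,
        norm_nonneg (v i - G)]
    calc ∑ i, ‖v i‖ ^ 2 ≤ ∑ i, (2 * ‖G‖ ^ 2 + 2 * ‖v i - G‖ ^ 2) :=
          Finset.sum_le_sum fun i _ => hptw i
      _ = N * (2 * ‖G‖ ^ 2) + 2 * ∑ i, ‖v i - G‖ ^ 2 := by
          rw [Finset.sum_add_distrib, Finset.sum_const, Finset.card_univ,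
            Fintype.card_fin, nsmul_eq_mul, ← Finset.mul_sum]
      _ ≤ N * (2 * ‖G‖ ^ 2) + 2 * (N * (L ^ 2 * ‖x - xt‖ ^ 2)) := by linarith [hvar]
      _ = N * (2 * ‖G‖ ^ 2 + 2 * (L ^ 2 * ‖x - xt‖ ^ 2)) := by ring
  -- per-index bounds
  have hdesc : ∀ i, f (x - η • v i) ≤ f x - η * ⟪G, v i⟫ + L / 2 * η ^ 2 * ‖v i‖ ^ 2 := by
    intro i
    have h := descent_lemma f hfdiff L hflip x (x - η • v i)
    have hsub : (x - η • v i) - x = -(η • v i) := by abel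
    rw [hsub] at h
    rw [inner_neg_right, real_inner_smul_right, norm_neg, norm_smul, Real.norm_eq_abs,
      abs_of_pos hη, mul_pow] at h
    calc f (x - η • v i) ≤ f x + -(η * ⟪G, v i⟫) + L / 2 * (η ^ 2 * ‖v i‖ ^ 2) := h
      _ = f x - η * ⟪G, v i⟫ + L / 2 * η ^ 2 * ‖v i‖ ^ 2 := by ring
  have hnorm : ∀ i, ‖(x - η • v i) - xt‖ ^ 2
      = ‖x - xt‖ ^ 2 - 2 * η * ⟪v i, x - xt⟫ + η ^ 2 * ‖v i‖ ^ 2 := by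
    intro i
    have hsub : (x - η • v i) - xt = (x - xt) - η • v i := by abel
    rw [hsub, norm_sub_sq_real, real_inner_smul_right, norm_smul, Real.norm_eq_abs,
      abs_of_pos hη, mul_pow, real_inner_comm]
    ring
  have hterm : ∀ i, f (x - η • v i) + cplus * ‖(x - η • v i) - xt‖ ^ 2
      ≤ f x + cplus * ‖x - xt‖ ^ 2 - η * ⟪G, v i⟫ - 2 * cplus * η * ⟪v i, x - xt⟫
        + (L / 2 * η ^ 2 + cplus * η ^ 2) * ‖v i‖ ^ 2 := by
    intro i
    have h1 := hdesc i
    have h2 := hnorm i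
    nlinarith [h1, h2, hcplus.le]
  -- sum up
  have hsum : ∑ i, (f (x - η • v i) + cplus * ‖(x - η • v i) - xt‖ ^ 2)
      ≤ N * (f x + cplus * ‖x - xt‖ ^ 2) - η * (N * ‖G‖ ^ 2)
        - 2 * cplus * η * (N * ⟪G, x - xt⟫)
        + (L / 2 * η ^ 2 + cplus * η ^ 2) * ∑ i, ‖v i‖ ^ 2 := by
    calc ∑ i, (f (x - η • v i) + cplus * ‖(x - η • v i) - xt‖ ^ 2)
        ≤ ∑ i, (f x + cplus * ‖x - xt‖ ^ 2 - η * ⟪G, v i⟫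
            - 2 * cplus * η * ⟪v i, x - xt⟫
            + (L / 2 * η ^ 2 + cplus * η ^ 2) * ‖v i‖ ^ 2) :=
          Finset.sum_le_sum fun i _ => hterm i
      _ = N * (f x + cplus * ‖x - xt‖ ^ 2) - η * ∑ i, ⟪G, v i⟫
          - 2 * cplus * η * ∑ i, ⟪v i, x - xt⟫
          + (L / 2 * η ^ 2 + cplus * η ^ 2) * ∑ i, ‖v i‖ ^ 2 := by
          rw [Finset.sum_add_distrib, Finset.sum_sub_distrib, Finset.sum_sub_distrib,
            Finset.sum_const, Finset.card_univ, Fintype.card_fin, nsmul_eq_mul,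
            ← Finset.mul_sum, ← Finset.mul_sum, ← Finset.mul_sum]
      _ = _ := by rw [hA, hB]
  -- Young's inequality
  have hY : -⟪G, x - xt⟫ ≤ 1 / (2 * β) * ‖G‖ ^ 2 + β / 2 * ‖x - xt‖ ^ 2 := by
    have h1 : -⟪G, x - xt⟫ ≤ ‖G‖ * ‖x - xt‖ := by
      have := abs_real_inner_le_norm G (x - xt)
      linarith [neg_abs_le ⟪G, x - xt⟫]
    have h2 : ‖G‖ * ‖x - xt‖ ≤ 1 / (2 * β) * ‖G‖ ^ 2 + β / 2 * ‖x - xt‖ ^ 2 := by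
      rw [← sub_nonneg]
      have key : 1 / (2 * β) * ‖G‖ ^ 2 + β / 2 * ‖x - xt‖ ^ 2 - ‖G‖ * ‖x - xt‖
          = 1 / (2 * β) * (‖G‖ - β * ‖x - xt‖) ^ 2 := by
        field_simp
        ring
      rw [key]
      positivity
    linarith
  have hq : (0 : ℝ) ≤ L / 2 * η ^ 2 + cplus * η ^ 2 := by positivity
  have hfinal : ∑ i, (f (x - η • v i) + cplus * ‖(x - η • v i) - xt‖ ^ 2)
      ≤ N * (f x + c * ‖x - xt‖ ^ 2 - Γ * ‖G‖ ^ 2) := by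
    have h3 := mul_le_mul_of_nonneg_left hS hq
    have h4 : -(2 * cplus * η * N) * ⟪G, x - xt⟫
        ≤ (2 * cplus * η * N) * (1 / (2 * β) * ‖G‖ ^ 2 + β / 2 * ‖x - xt‖ ^ 2) := by
      have h5 : (0 : ℝ) ≤ 2 * cplus * η * N := by positivity
      calc -(2 * cplus * η * N) * ⟪G, x - xt⟫
          = (2 * cplus * η * N) * (-⟪G, x - xt⟫) := by ring
        _ ≤ (2 * cplus * η * N) * (1 / (2 * β) * ‖G‖ ^ 2 + β / 2 * ‖x - xt‖ ^ 2) :=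
            mul_le_mul_of_nonneg_left hY h5
    have hexp : (2 * cplus * η * N) * (1 / (2 * β) * ‖G‖ ^ 2 + β / 2 * ‖x - xt‖ ^ 2)
        = N * (cplus * η / β * ‖G‖ ^ 2 + cplus * η * β * ‖x - xt‖ ^ 2) := by
      field_simp
    rw [hexp] at h4
    rw [hc, hΓ]
    nlinarith [hsum, h3, h4]
  calc (1 / N) * ∑ i, (f (x - η • v i) + cplus * ‖(x - η • v i) - xt‖ ^ 2)
      ≤ (1 / N) * (N * (f x + c * ‖x - xt‖ ^ 2 - Γ * ‖G‖ ^ 2)) :=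
        mul_le_mul_of_nonneg_left hfinal (by positivity)
    _ = f x + c * ‖x - xt‖ ^ 2 - Γ * ‖G‖ ^ 2 := by
        field_simp
end

section
/- (Convex SVRG single-step inequality) If each fᵢ is convex and L-smooth, and v = ∇f_i(x) - ∇f_i(x̃) + ∇f(x̃) with i uniform on [n], then for x⁺ = x - ηv: E_i[‖x⁺ - x*‖²] ≤ ‖x - x*‖² - 2η(1 - 2Lη)(f(x) - f(x*)) + 4Lη²(f(x̃) - f(x*)). -/
set_option linter.unusedSectionVars false
open RealInnerProductSpace

variable {F : Type*} [NormedAddCommGroup F] [InnerProductSpace ℝ F] [CompleteSpace F]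

lemma aux_fderiv_eq {h : F → ℝ} (hd : Differentiable ℝ h) (y : F) :
    fderiv ℝ h y = InnerProductSpace.toDual ℝ F (gradient h y) :=
  ((hd y).hasGradientAt.hasFDerivAt).fderiv

lemma aux_hasDerivAt_line {h : F → ℝ} (hd : Differentiable ℝ h) (p u : F) (t : ℝ) :
    HasDerivAt (fun s : ℝ => h (p + s • u)) ⟪gradient h (p + t • u), u⟫ t := by
  have hc : HasDerivAt (fun s : ℝ => p + s • u) u t := by
    simpa using ((hasDerivAt_id t).smul_const u).const_add p
  have hh : HasFDerivAt h (fderiv ℝ h (p + t • u)) (p + t • u) := (hd _).hasFDerivAt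
  have h2 := hh.comp_hasDerivAt t hc
  rw [aux_fderiv_eq hd] at h2
  rw [InnerProductSpace.toDual_apply_apply] at h2; exact h2

lemma aux_foc {h : F → ℝ} (hc : ConvexOn ℝ Set.univ h) (hd : Differentiable ℝ h) (p q : F) :
    h p + ⟪gradient h p, q - p⟫ ≤ h q := by
  have hg : ConvexOn ℝ Set.univ (fun t : ℝ => h (p + t • (q - p))) := by
    have h1 := hc.comp_affineMap (AffineMap.lineMap p q : ℝ →ᵃ[ℝ] F)
    have : (h ∘ (AffineMap.lineMap p q : ℝ →ᵃ[ℝ] F)) = fun t : ℝ => h (p + t • (q - p)) := by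
      funext t
      simp [AffineMap.lineMap_apply, add_comm]
    rw [this] at h1
    simpa using h1
  have hslope := hg.le_slope_of_hasDerivAt (Set.mem_univ (0:ℝ)) (Set.mem_univ (1:ℝ))
    zero_lt_one (aux_hasDerivAt_line hd p (q - p) 0)
  simp [slope_def_field, -inner_gradient_left] at hslope
  linarith

lemma aux_descent {h : F → ℝ} {L : ℝ} (hd : Differentiable ℝ h)
    (hl : ∀ a b, ‖gradient h a - gradient h b‖ ≤ L * ‖a - b‖) (p q : F) :
    h q ≤ h p + ⟪gradient h p, q - p⟫ + L / 2 * ‖q - p‖ ^ 2 := by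
  set u := q - p with hu
  set φ : ℝ → ℝ := fun t =>
    h (p + t • u) - t * ⟪gradient h p, u⟫ - t ^ 2 * (L / 2 * ‖u‖ ^ 2) with hφ
  have hφd : ∀ t : ℝ, HasDerivAt φ
      (⟪gradient h (p + t • u), u⟫ - ⟪gradient h p, u⟫ - 2 * t * (L / 2 * ‖u‖ ^ 2)) t := by
    intro t
    have h1 := aux_hasDerivAt_line hd p u t
    have h2 : HasDerivAt (fun t : ℝ => t * ⟪gradient h p, u⟫) ⟪gradient h p, u⟫ t := by
      simpa using (hasDerivAt_id t).mul_const (⟪gradient h p, u⟫ : ℝ)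
    have h3 : HasDerivAt (fun t : ℝ => t ^ 2 * (L / 2 * ‖u‖ ^ 2))
        (2 * t * (L / 2 * ‖u‖ ^ 2)) t := by
      simpa using (hasDerivAt_pow 2 t).mul_const (L / 2 * ‖u‖ ^ 2)
    exact (h1.sub h2).sub h3
  have hkey : φ 1 ≤ φ 0 := by
    have hanti : AntitoneOn φ (Set.Icc (0:ℝ) 1) := by
      apply antitoneOn_of_deriv_nonpos (convex_Icc (0:ℝ) 1)
      · exact (Differentiable.continuous (fun t => (hφd t).differentiableAt)).continuousOn
      · exact fun t _ => (hφd t).differentiableAt.differentiableWithinAt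
      · intro t ht
        rw [interior_Icc] at ht
        rw [(hφd t).deriv]
        have hb : (⟪gradient h (p + t • u), u⟫ : ℝ) - ⟪gradient h p, u⟫ ≤ L * t * ‖u‖ ^ 2 := by
          rw [← inner_sub_left]
          calc (⟪gradient h (p + t • u) - gradient h p, u⟫ : ℝ)
              ≤ ‖gradient h (p + t • u) - gradient h p‖ * ‖u‖ := real_inner_le_norm _ _
            _ ≤ (L * ‖p + t • u - p‖) * ‖u‖ := by
                have := hl (p + t • u) p
                exact mul_le_mul_of_nonneg_right this (norm_nonneg _)
            _ = L * t * ‖u‖ ^ 2 := by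
                rw [show p + t • u - p = t • u by abel, norm_smul]
                rw [Real.norm_eq_abs, abs_of_pos ht.1]
                ring
        nlinarith [ht.1.le]
    exact hanti (by norm_num) (by norm_num) zero_le_one
  have e0 : φ 0 = h p := by simp [hφ]
  have e1 : φ 1 = h q - ⟪gradient h p, u⟫ - L / 2 * ‖u‖ ^ 2 := by
    simp only [hφ, one_smul, one_pow, one_mul, hu]
    rw [show p + (q - p) = q by abel]
  rw [e0, e1] at hkey
  linarith

lemma aux_inner_convexOn (c : F) : ConvexOn ℝ Set.univ (fun z : F => (⟪c, z⟫ : ℝ)) :=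
  ⟨convex_univ, fun x _ y _ a b _ _ _ => by
    simp [inner_add_right, real_inner_smul_right, smul_eq_mul]⟩

lemma aux_inner_concaveOn (c : F) : ConcaveOn ℝ Set.univ (fun z : F => (⟪c, z⟫ : ℝ)) :=
  ⟨convex_univ, fun x _ y _ a b _ _ _ => by
    simp [inner_add_right, real_inner_smul_right, smul_eq_mul]⟩

lemma aux_coco {h : F → ℝ} {L : ℝ} (hL : 0 < L) (hc : ConvexOn ℝ Set.univ h)
    (hd : Differentiable ℝ h)
    (hl : ∀ a b, ‖gradient h a - gradient h b‖ ≤ L * ‖a - b‖) (p q : F) :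
    ‖gradient h q - gradient h p‖ ^ 2 ≤ 2 * L * (h q - h p - ⟪gradient h p, q - p⟫) := by
  set c := gradient h p with hcdef
  set φ : F → ℝ := fun z => h z - ⟪c, z⟫ with hφ
  have hφg : ∀ z, HasGradientAt φ (gradient h z - c) z := by
    intro z
    rw [hasGradientAt_iff_hasFDerivAt, map_sub]
    exact ((hd z).hasGradientAt.hasFDerivAt).sub (InnerProductSpace.toDual ℝ F c).hasFDerivAt
  have hφgrad : gradient φ = fun z => gradient h z - c := gradient_eq hφg
  have hφd : Differentiable ℝ φ := fun z => (hφg z).differentiableAt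
  have hφc : ConvexOn ℝ Set.univ φ := hc.sub (aux_inner_concaveOn c)
  have hφl : ∀ a b, ‖gradient φ a - gradient φ b‖ ≤ L * ‖a - b‖ := by
    intro a b
    rw [hφgrad]
    simpa [sub_sub_sub_cancel_right] using hl a b
  have hmin : ∀ z, φ p ≤ φ z := by
    intro z
    have := aux_foc hφc hφd p z
    rw [hφgrad] at this
    simpa [sub_self, hcdef] using this
  set w := gradient h q - c with hw
  have hdes := aux_descent hφd hφl q (q - L⁻¹ • w)
  rw [hφgrad] at hdes
  have e1 : q - L⁻¹ • w - q = -(L⁻¹ • w) := by abel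
  rw [e1] at hdes
  have e2 : (⟪gradient h q - c, -(L⁻¹ • w)⟫ : ℝ) = -(L⁻¹ * ‖w‖ ^ 2) := by
    rw [← hw, inner_neg_right, real_inner_smul_right, real_inner_self_eq_norm_sq]
  have e3 : ‖-(L⁻¹ • w)‖ ^ 2 = L⁻¹ ^ 2 * ‖w‖ ^ 2 := by
    rw [norm_neg, norm_smul, mul_pow, Real.norm_eq_abs, sq_abs]
  rw [e2, e3] at hdes
  have hpq := hmin (q - L⁻¹ • w)
  have key : ‖w‖ ^ 2 ≤ 2 * L * (φ q - φ p) := by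
    have hL' : L⁻¹ > 0 := inv_pos.mpr hL
    have : φ p ≤ φ q - L⁻¹ * ‖w‖ ^ 2 + L / 2 * (L⁻¹ ^ 2 * ‖w‖ ^ 2) := le_trans hpq hdes
    have heq : -(L⁻¹ * ‖w‖ ^ 2) + L / 2 * (L⁻¹ ^ 2 * ‖w‖ ^ 2) = -(‖w‖ ^ 2 / (2 * L)) := by
      field_simp
      ring
    have h5 : ‖w‖ ^ 2 / (2 * L) ≤ φ q - φ p := by linarith
    have h6 := (div_le_iff₀ (by positivity : (0:ℝ) < 2 * L)).mp h5
    linarith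
  have e4 : φ q - φ p = h q - h p - ⟪c, q - p⟫ := by
    simp only [hφ, inner_sub_right]
    ring
  rw [e4] at key
  exact key
lemma aux_convexOn_sum {ι : Type*} (t : Finset ι) (g : ι → F → ℝ)
    (h : ∀ i ∈ t, ConvexOn ℝ Set.univ (g i)) :
    ConvexOn ℝ Set.univ (fun x => ∑ i ∈ t, g i x) := by
  classical
  induction t using Finset.induction_on with
  | empty => simpa using convexOn_const (0:ℝ) convex_univ
  | insert a s hnot ih =>
    simp only [Finset.sum_insert hnot]
    exact (h a (Finset.mem_insert_self a s)).add
      (ih fun i hi => h i (Finset.mem_insert_of_mem hi))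

lemma aux_sq_sub_le (a b : F) : ‖a - b‖ ^ 2 ≤ 2 * ‖a‖ ^ 2 + 2 * ‖b‖ ^ 2 := by
  have h1 := norm_sub_sq_real a b
  have h2 : -(⟪a, b⟫ : ℝ) ≤ ‖a‖ * ‖b‖ :=
    le_trans (neg_le_abs _) (abs_real_inner_le_norm a b)
  nlinarith [sq_nonneg (‖a‖ - ‖b‖)]

set_option maxHeartbeats 1000000 in
theorem svrg_convex_single_step {d n : ℕ} [NeZero n]
    (fi : Fin n → EuclideanSpace ℝ (Fin d) → ℝ) (L η : ℝ) (hL : 0 < L) (hη : 0 < η)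
    (hconv : ∀ i, ConvexOn ℝ Set.univ (fi i))
    (hdiff : ∀ i, Differentiable ℝ (fi i))
    (hlip : ∀ i x y, ‖gradient (fi i) x - gradient (fi i) y‖ ≤ L * ‖x - y‖)
    (f : EuclideanSpace ℝ (Fin d) → ℝ)
    (hf : f = fun x => (1 / (n : ℝ)) * ∑ i, fi i x)
    (xstar : EuclideanSpace ℝ (Fin d)) (hmin : ∀ y, f xstar ≤ f y)
    (x xt : EuclideanSpace ℝ (Fin d)) :
    (1 / (n : ℝ)) * ∑ i,
        ‖(x - η • (gradient (fi i) x - gradient (fi i) xt + gradient f xt)) - xstar‖ ^ 2 ≤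
      ‖x - xstar‖ ^ 2 - 2 * η * (1 - 2 * L * η) * (f x - f xstar) +
        4 * L * η ^ 2 * (f xt - f xstar) := by
  classical
  have hN : (0:ℝ) < (n:ℝ) := by
    exact_mod_cast Nat.pos_of_ne_zero (NeZero.ne n)
  -- gradient of f
  have hgf : ∀ y, HasGradientAt f ((n:ℝ)⁻¹ • ∑ i, gradient (fi i) y) y := by
    intro y
    rw [hasGradientAt_iff_hasFDerivAt, map_smul, map_sum]
    have hsum := HasFDerivAt.sum (u := Finset.univ)
      (fun i _ => ((hdiff i) y).hasGradientAt.hasFDerivAt)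
    have h2 := hsum.const_mul ((n:ℝ)⁻¹)
    rw [hf]
    simpa [one_div] using h2
  have hgradf : ∀ y, gradient f y = (n:ℝ)⁻¹ • ∑ i, gradient (fi i) y :=
    fun y => (hgf y).gradient
  have hdf : Differentiable ℝ f := fun y => (hgf y).differentiableAt
  have hcf : ConvexOn ℝ Set.univ f := by
    rw [hf]
    have h1 := aux_convexOn_sum Finset.univ fi (fun i _ => hconv i)
    simpa [smul_eq_mul] using h1.smul (by positivity : (0:ℝ) ≤ 1 / (n:ℝ))
  have hg0 : gradient f xstar = 0 := by
    have hloc : IsLocalMin f xstar := Filter.Eventually.of_forall hmin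
    have h0 := hloc.fderiv_eq_zero
    show (InnerProductSpace.toDual ℝ _).symm (fderiv ℝ f xstar) = 0
    rw [h0]; simp
  have hfsum : ∀ y, ∑ i, fi i y = (n:ℝ) * f y := by
    intro y; rw [hf]; field_simp
  have hsumgrad : ∀ y, ∑ i, gradient (fi i) y = (n:ℝ) • gradient f y := by
    intro y
    rw [hgradf y, smul_smul, mul_inv_cancel₀ hN.ne', one_smul]
  have hs0 : ∑ i, gradient (fi i) xstar = 0 := by
    rw [hsumgrad, hg0, smul_zero]
  set D := x - xstar with hD
  set G := gradient f xt with hG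
  set s : Fin n → EuclideanSpace ℝ (Fin d) := fun i => gradient (fi i) xstar with hs
  set a : Fin n → EuclideanSpace ℝ (Fin d) := fun i => gradient (fi i) x - s i with ha
  set b : Fin n → EuclideanSpace ℝ (Fin d) := fun i => gradient (fi i) xt - s i with hb
  set v : Fin n → EuclideanSpace ℝ (Fin d) :=
    fun i => gradient (fi i) x - gradient (fi i) xt + G with hv
  have hterm : ∀ i, x - η • (gradient (fi i) x - gradient (fi i) xt + G) - xstar
      = D - η • v i := by
    intro i; rw [hv, hD]; abel
  rw [Finset.sum_congr rfl (fun i _ => by rw [hterm i])]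
  rw [one_div, inv_mul_le_iff₀ hN]
  -- expansion
  have hsumv : ∑ i, v i = (n:ℝ) • gradient f x := by
    rw [hv]
    rw [Finset.sum_add_distrib, Finset.sum_sub_distrib, hsumgrad x, hsumgrad xt]
    simp only [Finset.sum_const, Finset.card_univ, Fintype.card_fin, hG]
    rw [← Nat.cast_smul_eq_nsmul ℝ]
    abel
  have hexp : ∑ i, ‖D - η • v i‖ ^ 2
      = (n:ℝ) * ‖D‖ ^ 2 - 2 * η * ((n:ℝ) * ⟪gradient f x, D⟫) + η ^ 2 * ∑ i, ‖v i‖ ^ 2 := by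
    have e1 : ∀ i : Fin n, ‖D - η • v i‖ ^ 2
        = ‖D‖ ^ 2 - 2 * η * ⟪v i, D⟫ + η ^ 2 * ‖v i‖ ^ 2 := by
      intro i
      rw [norm_sub_sq_real, real_inner_smul_right, norm_smul, Real.norm_eq_abs, mul_pow, sq_abs,
        real_inner_comm]
      ring
    rw [Finset.sum_congr rfl (fun i _ => e1 i), Finset.sum_add_distrib, Finset.sum_sub_distrib]
    rw [Finset.sum_const, Finset.card_univ, Fintype.card_fin, ← Finset.mul_sum, ← Finset.mul_sum]
    rw [show ∑ i, (⟪v i, D⟫ : ℝ) = ⟪∑ i, v i, D⟫ from (sum_inner _ _ _).symm, hsumv,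
      real_inner_smul_left, nsmul_eq_mul]
  -- bounds
  have hvb : ∑ i, ‖v i‖ ^ 2 ≤ ∑ i, (2 * ‖a i‖ ^ 2 + 2 * ‖b i - G‖ ^ 2) := by
    apply Finset.sum_le_sum
    intro i _
    have hvi : v i = a i - (b i - G) := by rw [hv, ha, hb]; dsimp only; abel
    rw [hvi]
    exact aux_sq_sub_le _ _
  have hsumb : ∑ i, b i = (n:ℝ) • G := by
    rw [hb, Finset.sum_sub_distrib, hsumgrad xt, hs0, sub_zero, hG]
  have hvar : ∑ i, ‖b i - G‖ ^ 2 ≤ ∑ i, ‖b i‖ ^ 2 := by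
    have e1 : ∀ i : Fin n, ‖b i - G‖ ^ 2 = ‖b i‖ ^ 2 - 2 * ⟪b i, G⟫ + ‖G‖ ^ 2 :=
      fun i => norm_sub_sq_real _ _
    rw [Finset.sum_congr rfl (fun i _ => e1 i), Finset.sum_add_distrib, Finset.sum_sub_distrib]
    rw [Finset.sum_const, Finset.card_univ, Fintype.card_fin, ← Finset.mul_sum]
    rw [show ∑ i, (⟪b i, G⟫ : ℝ) = ⟪∑ i, b i, G⟫ from (sum_inner _ _ _).symm, hsumb,
      real_inner_smul_left, real_inner_self_eq_norm_sq, nsmul_eq_mul]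
    nlinarith [sq_nonneg ‖G‖, hN]
  have hca : ∑ i, ‖a i‖ ^ 2 ≤ 2 * L * ((n:ℝ) * (f x - f xstar)) := by
    have h1 : ∀ i : Fin n, ‖a i‖ ^ 2 ≤ 2 * L * (fi i x - fi i xstar - ⟪s i, D⟫) :=
      fun i => aux_coco hL (hconv i) (hdiff i) (hlip i) xstar x
    calc ∑ i, ‖a i‖ ^ 2 ≤ ∑ i, 2 * L * (fi i x - fi i xstar - ⟪s i, D⟫) :=
          Finset.sum_le_sum fun i _ => h1 i
      _ = 2 * L * ((n:ℝ) * (f x - f xstar)) := by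
          rw [← Finset.mul_sum, Finset.sum_sub_distrib, Finset.sum_sub_distrib,
            hfsum x, hfsum xstar,
            show ∑ i, (⟪s i, D⟫ : ℝ) = ⟪∑ i, s i, D⟫ from (sum_inner _ _ _).symm,
            show ∑ i, s i = 0 from hs0, inner_zero_left]
          ring
  have hcb : ∑ i, ‖b i‖ ^ 2 ≤ 2 * L * ((n:ℝ) * (f xt - f xstar)) := by
    have h1 : ∀ i : Fin n, ‖b i‖ ^ 2 ≤ 2 * L * (fi i xt - fi i xstar - ⟪s i, xt - xstar⟫) :=
      fun i => aux_coco hL (hconv i) (hdiff i) (hlip i) xstar xt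
    calc ∑ i, ‖b i‖ ^ 2 ≤ ∑ i, 2 * L * (fi i xt - fi i xstar - ⟪s i, xt - xstar⟫) :=
          Finset.sum_le_sum fun i _ => h1 i
      _ = 2 * L * ((n:ℝ) * (f xt - f xstar)) := by
          rw [← Finset.mul_sum, Finset.sum_sub_distrib, Finset.sum_sub_distrib,
            hfsum xt, hfsum xstar,
            show ∑ i, (⟪s i, xt - xstar⟫ : ℝ) = ⟪∑ i, s i, xt - xstar⟫ from
              (sum_inner _ _ _).symm,
            show ∑ i, s i = 0 from hs0, inner_zero_left]
          ring
  have hfoc : f x - f xstar ≤ ⟪gradient f x, D⟫ := by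
    have := aux_foc hcf hdf x xstar
    have e : (⟪gradient f x, xstar - x⟫ : ℝ) = -⟪gradient f x, D⟫ := by
      rw [hD, ← inner_neg_right]
      congr 1
      abel
    rw [e] at this
    linarith
  -- combine
  have hsv : ∑ i, ‖v i‖ ^ 2
      ≤ 4 * L * ((n:ℝ) * (f x - f xstar)) + 4 * L * ((n:ℝ) * (f xt - f xstar)) := by
    have h2 : ∑ i, (2 * ‖a i‖ ^ 2 + 2 * ‖b i - G‖ ^ 2)
        = 2 * ∑ i, ‖a i‖ ^ 2 + 2 * ∑ i, ‖b i - G‖ ^ 2 := by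
      rw [Finset.sum_add_distrib, ← Finset.mul_sum, ← Finset.mul_sum]
    linarith [hvb, hvar, hca, hcb]
  have e1 : η ^ 2 * ∑ i, ‖v i‖ ^ 2
      ≤ η ^ 2 * (4 * L * ((n:ℝ) * (f x - f xstar)) + 4 * L * ((n:ℝ) * (f xt - f xstar))) :=
    mul_le_mul_of_nonneg_left hsv (sq_nonneg η)
  have e2 : 2 * η * ((n:ℝ) * (f x - f xstar)) ≤ 2 * η * ((n:ℝ) * ⟪gradient f x, D⟫) := by
    apply mul_le_mul_of_nonneg_left _ (by positivity : (0:ℝ) ≤ 2 * η)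
    exact mul_le_mul_of_nonneg_left hfoc hN.le
  rw [hexp]
  nlinarith [e1, e2]
end
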